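/- arXiv:2212.00976 — 5 statements merged into one kernel-verified Lean document; each statement's English description precedes it below -/
import Mathlib

section
/- Let $B_0 \subset B \subset B_1$ be Banach spaces with continuous linear embeddings, where $B_0$ and $B_1$ are reflexive and the embedding $B_0 \hookrightarrow B$ is compact. Let $T>0$, $p \in (1,\infty)$ and $\alpha \in (0,1)$. Then every sequence $(g_n)$ of measurable functions $g_n : [0,T] \to B_0$ satisfying $\sup_n \int_0^T \|g_n(t)\|_{B_0}^p\,dt < \infty$ and $\sup_n \int_0^T\int_0^T \frac{\|g_n(t)-g_n(s)\|_{B_1}^p}{|t-s|^{1+\alpha p}}\,ds\,dt < \infty$ has a subsequence that converges in $L^p(0,T;B)$, i.e. the space $L^p(0,T;B_0) \cap W^{\alpha,p}(0,T;B_1)$ is compactly embedded in $L^p(0,T;B)$. -/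
/-!
Cut `(0, T]` into `k` cells of length `T / k` and let `P g` be the step function of the cell
averages of `g`. On each cell, Jensen's inequality gives `‖P g‖_{L^p(B₀)} ≤ ‖g‖_{L^p(B₀)}`, and a
fractional Poincaré inequality gives `‖g - P g‖_{L^p(B₁)} ≤ (T / k) ^ α [g]_{W^{α,p}(B₁)}`.
Ehrling's inequality `‖x‖_B ≤ δ ‖x‖_{B₀} + C_δ ‖x‖_{B₁}`, which follows from the compactness of
`B₀ ↪ B` and the injectivity of `B ↪ B₁`, turns these into a bound on `‖g_n - P g_n‖_{L^p(B)}`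
that is small uniformly in `n` once `δ` is small and `k` is large. The cell averages of the `g_n`
are bounded in `B₀`, so for fixed `k` the `P g_n` lie in a compact subset of `L^p(B)`. Hence
`(g_n)` is totally bounded in the complete space `L^p(B)` and has a convergent subsequence.
-/

open MeasureTheory Filter Topology Set Function
open scoped ENNReal NNReal

section LpNorm

variable {α E F G : Type*} [MeasurableSpace α] {μ : Measure α}
  [NormedAddCommGroup E] [NormedAddCommGroup F] [NormedAddCommGroup G]

theorem eLpNorm_ofReal_rpow_eq_lintegral {f : α → E} {p : ℝ} (hp : 0 < p) :
    eLpNorm f (ENNReal.ofReal p) μ ^ p = ∫⁻ x, ‖f x‖ₑ ^ p ∂μ := by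
  rw [eLpNorm_eq_eLpNorm' (by simpa using hp) ENNReal.ofReal_ne_top,
    ENNReal.toReal_ofReal hp.le, lintegral_rpow_enorm_eq_rpow_eLpNorm' hp]

theorem eLpNorm_ofReal_le_of_lintegral_le {f : α → E} {p : ℝ} (hp : 0 < p) {A : ℝ≥0∞}
    (h : ∫⁻ x, ‖f x‖ₑ ^ p ∂μ ≤ A) : eLpNorm f (ENNReal.ofReal p) μ ≤ A ^ p⁻¹ :=
  (ENNReal.le_rpow_inv_iff hp).2 (by rwa [eLpNorm_ofReal_rpow_eq_lintegral hp])

theorem memLp_ofReal_of_lintegral_le {f : α → E} (hf : AEStronglyMeasurable f μ) {p : ℝ}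
    (hp : 0 < p) {A : ℝ≥0∞} (hA : A ≠ ∞) (h : ∫⁻ x, ‖f x‖ₑ ^ p ∂μ ≤ A) :
    MemLp f (ENNReal.ofReal p) μ :=
  ⟨hf, (eLpNorm_ofReal_le_of_lintegral_le hp h).trans_lt
    (ENNReal.rpow_lt_top_of_nonneg (by positivity) hA)⟩

theorem eLpNorm_le_add_of_norm_le {f : α → E} {g : α → F} {h : α → G}
    (hg : AEStronglyMeasurable g μ) (hh : AEStronglyMeasurable h μ) {p : ℝ≥0∞} (hp : 1 ≤ p)
    {a b : ℝ} (ha : 0 ≤ a) (hb : 0 ≤ b) (hfgh : ∀ x, ‖f x‖ ≤ a * ‖g x‖ + b * ‖h x‖) :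
    eLpNorm f p μ ≤ ENNReal.ofReal a * eLpNorm g p μ + ENNReal.ofReal b * eLpNorm h p μ := by
  calc eLpNorm f p μ ≤ eLpNorm (a • (fun x => ‖g x‖) + b • fun x => ‖h x‖) p μ :=
        eLpNorm_mono_real hfgh
    _ ≤ eLpNorm (a • fun x => ‖g x‖) p μ + eLpNorm (b • fun x => ‖h x‖) p μ :=
        eLpNorm_add_le (hg.norm.const_smul a) (hh.norm.const_smul b) hp
    _ = _ := by
        rw [eLpNorm_const_smul, eLpNorm_const_smul, eLpNorm_norm, eLpNorm_norm,
          Real.enorm_of_nonneg ha, Real.enorm_of_nonneg hb]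

end LpNorm

section Averages

variable {α E F : Type*} [MeasurableSpace α] {μ : Measure α}
  [NormedAddCommGroup E] [NormedSpace ℝ E] [NormedAddCommGroup F] [NormedSpace ℝ F]

theorem measure_mul_enorm_setAverage_rpow_le {s : Set α} {f : α → E}
    (hf : AEStronglyMeasurable f (μ.restrict s)) (hs₀ : μ s ≠ 0) (hs : μ s ≠ ∞)
    {p : ℝ} (hp : 1 ≤ p) :
    μ s * ‖⨍ x in s, f x ∂μ‖ₑ ^ p ≤ ∫⁻ x in s, ‖f x‖ₑ ^ p ∂μ := by
  have hp₀ : 0 < p := zero_lt_one.trans_le hp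
  have havg : ‖⨍ x in s, f x ∂μ‖ₑ ≤ (μ s)⁻¹ * eLpNorm f 1 (μ.restrict s) := by
    rw [setAverage_eq, enorm_smul, eLpNorm_one_eq_lintegral_enorm, measureReal_def,
      Real.enorm_eq_ofReal (by positivity), ENNReal.ofReal_inv_of_pos (ENNReal.toReal_pos hs₀ hs),
      ENNReal.ofReal_toReal hs]
    gcongr
    exact enorm_integral_le_lintegral_enorm _
  have holder := eLpNorm_le_eLpNorm_mul_rpow_measure_univ
    (ENNReal.one_le_ofReal.2 hp) hf
  rw [Measure.restrict_apply_univ, ENNReal.toReal_one, ENNReal.toReal_ofReal hp₀.le] at holder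
  calc μ s * ‖⨍ x in s, f x ∂μ‖ₑ ^ p
      ≤ μ s * ((μ s)⁻¹ * (eLpNorm f (ENNReal.ofReal p) (μ.restrict s)
          * μ s ^ (1 / 1 - 1 / p))) ^ p := by gcongr; exact havg.trans (by gcongr)
    _ = μ s * (μ s)⁻¹ ^ p * μ s ^ ((1 - 1 / p) * p)
          * eLpNorm f (ENNReal.ofReal p) (μ.restrict s) ^ p := by
      rw [ENNReal.mul_rpow_of_nonneg _ _ hp₀.le, ENNReal.mul_rpow_of_nonneg _ _ hp₀.le,
        ← ENNReal.rpow_mul, div_one]; ring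
    _ = ∫⁻ x in s, ‖f x‖ₑ ^ p ∂μ := by
      rw [eLpNorm_ofReal_rpow_eq_lintegral hp₀, ENNReal.inv_rpow, ← ENNReal.rpow_neg, sub_mul,
        one_div_mul_cancel hp₀.ne', one_mul, mul_assoc (μ s), ← ENNReal.rpow_add _ _ hs₀ hs,
        show -p + (p - 1) = -1 by ring, ENNReal.rpow_neg_one, ENNReal.mul_inv_cancel hs₀ hs,
        one_mul]

theorem sub_setAverage_eq_setAverage_sub [CompleteSpace E] {s : Set α} (hs₀ : μ s ≠ 0)
    (hs : μ s ≠ ∞) {f : α → E} (hf : IntegrableOn f s μ) (c : E) :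
    c - ⨍ x in s, f x ∂μ = ⨍ x in s, (c - f x) ∂μ := by
  have : IsFiniteMeasure (μ.restrict s) := isFiniteMeasure_restrict.2 hs
  rw [setAverage_eq, setAverage_eq, integral_sub (integrable_const c) hf, smul_sub,
    setIntegral_const, smul_smul,
    inv_mul_cancel₀ (show μ.real s ≠ 0 from ENNReal.toReal_ne_zero.2 ⟨hs₀, hs⟩), one_smul]

theorem ContinuousLinearMap.map_setAverage [CompleteSpace E] [CompleteSpace F] (A : E →L[ℝ] F)
    {s : Set α} {f : α → E} (hf : IntegrableOn f s μ) :
    A (⨍ x in s, f x ∂μ) = ⨍ x in s, A (f x) ∂μ := by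
  rw [setAverage_eq, setAverage_eq, map_smul, A.integral_comp_comm hf]

end Averages

/-- `[f]_{W^{α,p}(s)} ^ p`, the `p`-th power of the Gagliardo seminorm of `f` on `s`. -/
noncomputable def gagliardoIntegral {E : Type*} [NormedAddCommGroup E] (s : Set ℝ) (α p : ℝ)
    (f : ℝ → E) : ℝ≥0∞ :=
  ∫⁻ t in s, ∫⁻ u in s, ‖f t - f u‖ₑ ^ p / ENNReal.ofReal (|t - u| ^ (1 + α * p))

theorem enorm_sub_rpow_le_mul_div {E : Type*} [NormedAddCommGroup E] {f : ℝ → E}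
    {a b t u p e : ℝ} (hp : 0 < p) (he : 0 ≤ e) (ht : t ∈ Ioc a b) (hu : u ∈ Ioc a b) :
    ‖f t - f u‖ₑ ^ p
      ≤ ENNReal.ofReal ((b - a) ^ e) * (‖f t - f u‖ₑ ^ p / ENNReal.ofReal (|t - u| ^ e)) := by
  rcases eq_or_ne t u with rfl | htu
  · simp [ENNReal.zero_rpow_of_pos hp]
  have hw₀ : ENNReal.ofReal (|t - u| ^ e) ≠ 0 := by
    have := abs_pos.2 (sub_ne_zero.2 htu)
    positivity
  have hdist : |t - u| ≤ b - a := by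
    rw [abs_sub_le_iff]; constructor <;> linarith [ht.1, ht.2, hu.1, hu.2]
  calc ‖f t - f u‖ₑ ^ p
      = ‖f t - f u‖ₑ ^ p / ENNReal.ofReal (|t - u| ^ e) * ENNReal.ofReal (|t - u| ^ e) :=
        (ENNReal.div_mul_cancel hw₀ ENNReal.ofReal_ne_top).symm
    _ ≤ _ := by
      rw [mul_comm]
      gcongr

theorem setLIntegral_enorm_sub_setAverage_rpow_le {E : Type*} [NormedAddCommGroup E]
    [NormedSpace ℝ E] [CompleteSpace E] {a b : ℝ} (hab : a < b) {f : ℝ → E}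
    (hf : IntegrableOn f (Ioc a b)) {α p : ℝ} (hα : 0 ≤ α) (hp : 1 ≤ p) :
    ∫⁻ t in Ioc a b, ‖f t - ⨍ u in Ioc a b, f u‖ₑ ^ p
      ≤ ENNReal.ofReal ((b - a) ^ (α * p)) * gagliardoIntegral (Ioc a b) α p f := by
  have hL : 0 < b - a := sub_pos.2 hab
  have hL₀ : ENNReal.ofReal (b - a) ≠ 0 := (ENNReal.ofReal_pos.2 hL).ne'
  have hvol : volume (Ioc a b) = ENNReal.ofReal (b - a) := Real.volume_Ioc
  set e := 1 + α * p
  have hpoint : ∀ t ∈ Ioc a b, ENNReal.ofReal (b - a) * ‖f t - ⨍ u in Ioc a b, f u‖ₑ ^ p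
      ≤ ENNReal.ofReal ((b - a) ^ e) *
        ∫⁻ u in Ioc a b, ‖f t - f u‖ₑ ^ p / ENNReal.ofReal (|t - u| ^ e) := by
    intro t ht
    rw [sub_setAverage_eq_setAverage_sub (hvol ▸ hL₀) (hvol ▸ ENNReal.ofReal_ne_top) hf, ← hvol,
      ← lintegral_const_mul' _ _ ENNReal.ofReal_ne_top]
    refine (measure_mul_enorm_setAverage_rpow_le (aestronglyMeasurable_const.sub hf.1)
      (hvol ▸ hL₀) (hvol ▸ ENNReal.ofReal_ne_top) hp).trans ?_
    exact setLIntegral_mono' measurableSet_Ioc fun u hu =>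
      enorm_sub_rpow_le_mul_div (zero_lt_one.trans_le hp) (by positivity) ht hu
  calc ∫⁻ t in Ioc a b, ‖f t - ⨍ u in Ioc a b, f u‖ₑ ^ p
      = (ENNReal.ofReal (b - a))⁻¹ *
          ∫⁻ t in Ioc a b, ENNReal.ofReal (b - a) * ‖f t - ⨍ u in Ioc a b, f u‖ₑ ^ p := by
        rw [lintegral_const_mul' _ _ ENNReal.ofReal_ne_top,
          ENNReal.inv_mul_cancel_left hL₀ ENNReal.ofReal_ne_top]
    _ ≤ (ENNReal.ofReal (b - a))⁻¹ * (ENNReal.ofReal ((b - a) ^ e) *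
          gagliardoIntegral (Ioc a b) α p f) := by
        rw [gagliardoIntegral, ← lintegral_const_mul' _ _ ENNReal.ofReal_ne_top]
        exact mul_le_mul_right (setLIntegral_mono' measurableSet_Ioc hpoint) _
    _ = ENNReal.ofReal ((b - a) ^ (α * p)) * gagliardoIntegral (Ioc a b) α p f := by
        rw [Real.rpow_add hL, Real.rpow_one, ENNReal.ofReal_mul hL.le, mul_assoc,
          ENNReal.inv_mul_cancel_left hL₀ ENNReal.ofReal_ne_top]

theorem exists_ehrling_bound {X Y Z : Type*} [NormedAddCommGroup X] [NormedSpace ℝ X]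
    [NormedAddCommGroup Y] [NormedSpace ℝ Y] [NormedAddCommGroup Z] [NormedSpace ℝ Z]
    (A : X →L[ℝ] Y) (J : Y →L[ℝ] Z) (hJ : Injective J)
    (hA : ∀ s : Set X, Bornology.IsBounded s → IsCompact (closure (A '' s)))
    {ε : ℝ} (hε : 0 < ε) :
    ∃ C, 0 ≤ C ∧ ∀ x, ‖A x‖ ≤ ε * ‖x‖ + C * ‖J (A x)‖ := by
  set K := closure (A '' Metric.closedBall 0 1) ∩ {y | ε ≤ ‖y‖}
  have hK : IsCompact K :=
    (hA _ Metric.isBounded_closedBall).inter_right (isClosed_le continuous_const continuous_norm)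
  have hJK : ∀ y ∈ K, ‖J y‖ ≠ 0 := fun y hy hJy =>
    (hε.trans_le hy.2).ne' (by simpa using hJ (norm_eq_zero.1 hJy |>.trans J.map_zero.symm))
  -- `J` does not vanish on the compact set `K`, so `‖J y‖⁻¹` is bounded there.
  obtain ⟨D, hD⟩ := hK.exists_bound_of_continuousOn
    ((continuous_norm.comp J.continuous).continuousOn.inv₀ hJK)
  have hball : ∀ x, ‖x‖ ≤ 1 → ‖A x‖ ≤ ε + ‖A‖ * |D| * ‖J (A x)‖ := by
    intro x hx
    by_cases hAx : ‖A x‖ < ε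
    · have : 0 ≤ ‖A‖ * |D| * ‖J (A x)‖ := by positivity
      linarith
    have hmem : A x ∈ K :=
      ⟨subset_closure (mem_image_of_mem A (mem_closedBall_zero_iff.2 hx)), not_lt.1 hAx⟩
    have hJpos : 0 < ‖J (A x)‖ := (norm_nonneg _).lt_of_ne (hJK _ hmem).symm
    have hinv : ‖J (A x)‖⁻¹ ≤ |D| := by
      simpa [abs_of_pos (inv_pos.2 hJpos)] using (hD _ hmem).trans (le_abs_self D)
    calc ‖A x‖ ≤ ‖A‖ * 1 := (A.le_opNorm x).trans (by gcongr)
      _ ≤ ‖A‖ * (|D| * ‖J (A x)‖) := by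
        gcongr
        calc (1 : ℝ) = ‖J (A x)‖⁻¹ * ‖J (A x)‖ := (inv_mul_cancel₀ hJpos.ne').symm
          _ ≤ |D| * ‖J (A x)‖ := by gcongr
      _ ≤ ε + ‖A‖ * |D| * ‖J (A x)‖ := by rw [← mul_assoc]; linarith
  refine ⟨‖A‖ * |D|, by positivity, fun x => ?_⟩
  rcases eq_or_ne x 0 with rfl | hx
  · simp
  have hx₀ : 0 < ‖x‖ := norm_pos_iff.2 hx
  have h := hball (‖x‖⁻¹ • x) (by rw [norm_smul, norm_inv, norm_norm, inv_mul_cancel₀ hx₀.ne'])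
  simp only [map_smul, norm_smul, norm_inv, norm_norm] at h
  calc ‖A x‖ = ‖x‖ * (‖x‖⁻¹ * ‖A x‖) := by field_simp
    _ ≤ ‖x‖ * (ε + ‖A‖ * |D| * (‖x‖⁻¹ * ‖J (A x)‖)) := by gcongr
    _ = ε * ‖x‖ + ‖A‖ * |D| * ‖J (A x)‖ := by field_simp

section StepAverage

variable {α ι E F : Type*} [MeasurableSpace α] [Fintype ι]
  [NormedAddCommGroup E] [NormedSpace ℝ E] [NormedAddCommGroup F] [NormedSpace ℝ F]
  {μ : Measure α} {I : ι → Set α} {f : α → E}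

noncomputable def stepAverage (μ : Measure α) (I : ι → Set α) (f : α → E) (x : α) : E :=
  ∑ i, (I i).indicator (fun _ => ⨍ y in I i, f y ∂μ) x

theorem stepAverage_of_mem (hI : Pairwise (Disjoint on I)) {i : ι} {x : α} (hx : x ∈ I i) :
    stepAverage μ I f x = ⨍ y in I i, f y ∂μ := by
  rw [stepAverage, Finset.sum_eq_single i (fun j _ hji => indicator_of_notMem
    (disjoint_left.1 (hI hji.symm) hx) _) (by simp), indicator_of_mem hx]

theorem stronglyMeasurable_stepAverage (hI : ∀ i, MeasurableSet (I i)) :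
    StronglyMeasurable (stepAverage μ I f) :=
  Finset.stronglyMeasurable_fun_sum _ fun i _ => stronglyMeasurable_const.indicator (hI i)

theorem ContinuousLinearMap.map_stepAverage [CompleteSpace E] [CompleteSpace F] (A : E →L[ℝ] F)
    (hf : ∀ i, IntegrableOn f (I i) μ) (x : α) :
    A (stepAverage μ I f x) = stepAverage μ I (fun y => A (f y)) x := by
  simp only [stepAverage, map_sum]
  refine Finset.sum_congr rfl fun i _ => ?_
  by_cases hx : x ∈ I i
  · rw [indicator_of_mem hx, indicator_of_mem hx, A.map_setAverage (hf i)]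
  · rw [indicator_of_notMem hx, indicator_of_notMem hx, map_zero]

theorem setLIntegral_iUnion_enorm_stepAverage_rpow_le (hI : ∀ i, MeasurableSet (I i))
    (hd : Pairwise (Disjoint on I)) (hI₀ : ∀ i, μ (I i) ≠ 0) (hIfin : ∀ i, μ (I i) ≠ ∞)
    (hf : ∀ i, AEStronglyMeasurable f (μ.restrict (I i))) {p : ℝ} (hp : 1 ≤ p) :
    ∫⁻ x in ⋃ i, I i, ‖stepAverage μ I f x‖ₑ ^ p ∂μ ≤ ∫⁻ x in ⋃ i, I i, ‖f x‖ₑ ^ p ∂μ := by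
  rw [lintegral_iUnion hI hd, lintegral_iUnion hI hd, tsum_fintype, tsum_fintype]
  refine Finset.sum_le_sum fun i _ => ?_
  rw [setLIntegral_congr_fun (hI i) fun x hx => by rw [stepAverage_of_mem hd hx],
    setLIntegral_const, mul_comm]
  exact measure_mul_enorm_setAverage_rpow_le (hf i) (hI₀ i) (hIfin i) hp

theorem coeFn_sum_indicatorConstLp_setAverage {ν : Measure α} {p : ℝ≥0∞}
    (hI : ∀ i, MeasurableSet (I i)) (hν : ∀ i, ν (I i) ≠ ∞) :
    ⇑(∑ i, indicatorConstLp p (hI i) (hν i) (⨍ y in I i, f y ∂μ)) =ᵐ[ν] stepAverage μ I f := by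
  filter_upwards [Lp.coeFn_fun_finsetSum (μ := ν) Finset.univ
      fun i => indicatorConstLp p (hI i) (hν i) (⨍ y in I i, f y ∂μ),
    ae_all_iff.2 fun i => indicatorConstLp_coeFn (p := p) (hs := hI i) (hμs := hν i)
      (c := ⨍ y in I i, f y ∂μ)] with x hsum hind
  rw [hsum, stepAverage]
  exact Finset.sum_congr rfl fun i _ => hind i

end StepAverage

noncomputable def uniformCell (T : ℝ) (k : ℕ) (j : Fin k) : Set ℝ :=
  Ioc (j * (T / k)) ((j + 1) * (T / k))

theorem volume_uniformCell (T : ℝ) (k : ℕ) (j : Fin k) :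
    volume (uniformCell T k j) = ENNReal.ofReal (T / k) := by
  rw [uniformCell, Real.volume_Ioc]; ring_nf

theorem pairwise_disjoint_uniformCell {T : ℝ} (hT : 0 ≤ T) (k : ℕ) :
    Pairwise (Disjoint on uniformCell T k) := by
  have hmono : ∀ i j : Fin k, i < j → Disjoint (uniformCell T k i) (uniformCell T k j) :=
    fun i j hij => Ioc_disjoint_Ioc_of_le <| by
      gcongr
      exact_mod_cast Nat.succ_le_of_lt hij
  intro i j hij
  rcases hij.lt_or_gt with h | h
  · exact hmono i j h
  · exact (hmono j i h).symm

theorem iUnion_uniformCell {T : ℝ} (hT : 0 ≤ T) {k : ℕ} (hk : k ≠ 0) :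
    ⋃ j, uniformCell T k j = Ioc 0 T := by
  have hkT : (k : ℝ) * (T / k) = T := mul_div_cancel₀ T (Nat.cast_ne_zero.2 hk)
  apply subset_antisymm
  · refine iUnion_subset fun j => Ioc_subset_Ioc (by positivity) ?_
    calc ((j : ℝ) + 1) * (T / k) ≤ k * (T / k) := by
          gcongr; exact_mod_cast j.isLt
      _ = T := hkT
  · intro t ht
    have := Ioc_subset_biUnion_Ioc k (fun j : ℕ => (j : ℝ) * (T / k))
      (by simpa [hkT] using ht)
    obtain ⟨j, hj, htj⟩ := mem_iUnion₂.1 this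
    exact mem_iUnion.2 ⟨⟨j, Finset.mem_range.1 hj⟩, by simpa [uniformCell] using htj⟩

section UniformCell

variable {E : Type*} [NormedAddCommGroup E] [NormedSpace ℝ E] {T : ℝ} {k : ℕ} {f : ℝ → E}
  {p : ℝ}

theorem eLpNorm_stepAverage_uniformCell_le (hT : 0 < T) (hk : k ≠ 0)
    (hf : AEStronglyMeasurable f (volume.restrict (Ioc 0 T))) (hp : 1 ≤ p) :
    eLpNorm (stepAverage volume (uniformCell T k) f) (ENNReal.ofReal p)
      (volume.restrict (Ioc 0 T)) ≤ eLpNorm f (ENNReal.ofReal p) (volume.restrict (Ioc 0 T)) := by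
  have hp₀ : 0 < p := zero_lt_one.trans_le hp
  have hU := iUnion_uniformCell hT.le hk
  rw [← ENNReal.rpow_le_rpow_iff hp₀, eLpNorm_ofReal_rpow_eq_lintegral hp₀,
    eLpNorm_ofReal_rpow_eq_lintegral hp₀, ← hU]
  rw [← hU] at hf
  refine setLIntegral_iUnion_enorm_stepAverage_rpow_le (fun _ => measurableSet_Ioc)
    (pairwise_disjoint_uniformCell hT.le k) (fun j => ?_) (fun j => ?_)
    (fun j => hf.mono_measure (Measure.restrict_mono (subset_iUnion _ j) le_rfl)) hp
  · exact (volume_uniformCell T k j).trans_ne (ENNReal.ofReal_pos.2 (by positivity)).ne'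
  · exact (volume_uniformCell T k j).trans_ne ENNReal.ofReal_ne_top

theorem enorm_setAverage_uniformCell_le (hT : 0 < T) (hk : k ≠ 0)
    (hf : AEStronglyMeasurable f (volume.restrict (Ioc 0 T))) (hp : 1 ≤ p) (j : Fin k) :
    ‖⨍ t in uniformCell T k j, f t‖ₑ
      ≤ ((ENNReal.ofReal (T / k))⁻¹ * ∫⁻ t in Ioc 0 T, ‖f t‖ₑ ^ p) ^ p⁻¹ := by
  have hsub : uniformCell T k j ⊆ Ioc 0 T := iUnion_uniformCell hT.le hk ▸ subset_iUnion _ j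
  have hL : ENNReal.ofReal (T / k) ≠ 0 := by simp; positivity
  have h := measure_mul_enorm_setAverage_rpow_le
    (hf.mono_measure (Measure.restrict_mono hsub le_rfl)) ((volume_uniformCell T k j).trans_ne hL)
    ((volume_uniformCell T k j).trans_ne ENNReal.ofReal_ne_top) hp
  rw [volume_uniformCell, mul_comm,
    ← ENNReal.le_div_iff_mul_le (Or.inl hL) (Or.inl ENNReal.ofReal_ne_top),
    ENNReal.div_eq_inv_mul] at h
  exact (ENNReal.le_rpow_inv_iff (zero_lt_one.trans_le hp)).2
    (h.trans (mul_le_mul_right (lintegral_mono_set hsub) _))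

theorem setLIntegral_enorm_sub_stepAverage_uniformCell_rpow_le [CompleteSpace E] (hT : 0 < T)
    (hk : k ≠ 0) (hf : IntegrableOn f (Ioc 0 T)) {α : ℝ} (hα : 0 ≤ α) (hp : 1 ≤ p) :
    ∫⁻ t in Ioc 0 T, ‖f t - stepAverage volume (uniformCell T k) f t‖ₑ ^ p
      ≤ ENNReal.ofReal ((T / k) ^ (α * p)) * gagliardoIntegral (Ioc 0 T) α p f := by
  have hU := iUnion_uniformCell hT.le hk
  have hd := pairwise_disjoint_uniformCell hT.le k
  have hmeas : ∀ j, MeasurableSet (uniformCell T k j) := fun _ => measurableSet_Ioc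
  have hsub : ∀ j, uniformCell T k j ⊆ Ioc 0 T := fun j => hU ▸ subset_iUnion _ j
  have hsplit : ∀ F : ℝ → ℝ≥0∞, ∫⁻ t in Ioc 0 T, F t = ∑ j, ∫⁻ t in uniformCell T k j, F t := by
    intro F
    rw [← hU, lintegral_iUnion hmeas hd, tsum_fintype]
  have hcell : ∀ j, ∫⁻ t in uniformCell T k j,
      ‖f t - stepAverage volume (uniformCell T k) f t‖ₑ ^ p
        ≤ ENNReal.ofReal ((T / k) ^ (α * p)) * ∫⁻ t in uniformCell T k j, ∫⁻ u in Ioc 0 T,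
          ‖f t - f u‖ₑ ^ p / ENNReal.ofReal (|t - u| ^ (1 + α * p)) := by
    intro j
    rw [setLIntegral_congr_fun (hmeas j) fun t ht => by rw [stepAverage_of_mem hd ht]]
    have hcell := setLIntegral_enorm_sub_setAverage_rpow_le
      (a := j * (T / k)) (b := (j + 1) * (T / k)) (by gcongr; linarith) (hf.mono_set (hsub j))
      hα hp
    rw [show ((j : ℝ) + 1) * (T / k) - j * (T / k) = T / k by ring, gagliardoIntegral] at hcell
    exact hcell.trans (mul_le_mul_right (lintegral_mono fun t => lintegral_mono_set (hsub j)) _)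
  rw [hsplit, gagliardoIntegral, hsplit, Finset.mul_sum]
  exact Finset.sum_le_sum fun j _ => hcell j

theorem eLpNorm_sub_stepAverage_uniformCell_le [CompleteSpace E] (hT : 0 < T) (hk : k ≠ 0)
    (hf : IntegrableOn f (Ioc 0 T)) {α : ℝ} (hα : 0 ≤ α) (hp : 1 ≤ p) :
    eLpNorm (fun t => f t - stepAverage volume (uniformCell T k) f t) (ENNReal.ofReal p)
      (volume.restrict (Ioc 0 T))
      ≤ ENNReal.ofReal ((T / k) ^ α) * gagliardoIntegral (Ioc 0 T) α p f ^ p⁻¹ := by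
  have hp₀ : 0 < p := zero_lt_one.trans_le hp
  refine (eLpNorm_ofReal_le_of_lintegral_le hp₀
    (setLIntegral_enorm_sub_stepAverage_uniformCell_rpow_le hT hk hf hα hp)).trans_eq ?_
  rw [ENNReal.mul_rpow_of_nonneg _ _ (by positivity),
    ENNReal.ofReal_rpow_of_nonneg (by positivity) (by positivity), ← Real.rpow_mul (by positivity),
    mul_inv_cancel_right₀ hp₀.ne']

end UniformCell

theorem totallyBounded_of_forall_exists_dist_lt {X : Type*} [PseudoMetricSpace X] {s : Set X}
    (h : ∀ ε > 0, ∃ t, TotallyBounded t ∧ ∀ x ∈ s, ∃ y ∈ t, dist x y < ε) :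
    TotallyBounded s := by
  refine Metric.totallyBounded_iff.2 fun ε hε => ?_
  obtain ⟨t, ht, hst⟩ := h (ε / 2) (half_pos hε)
  obtain ⟨u, hu, htu⟩ := Metric.totallyBounded_iff.1 ht (ε / 2) (half_pos hε)
  refine ⟨u, hu, fun x hx => ?_⟩
  obtain ⟨y, hy, hxy⟩ := hst x hx
  obtain ⟨z, hz, hyz⟩ := mem_iUnion₂.1 (htu hy)
  exact mem_iUnion₂.2 ⟨z, hz, (dist_triangle x y z).trans_lt
    (by linarith [Metric.mem_ball.1 hyz])⟩

section LpCompactness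

variable {α E : Type*} [MeasurableSpace α] {μ : Measure α} [NormedAddCommGroup E] {p : ℝ≥0∞}
  [Fact (1 ≤ p)]

theorem continuous_indicatorConstLp {s : Set α} (hs : MeasurableSet s) (hμs : μ s ≠ ∞) :
    Continuous (indicatorConstLp p hs hμs : E → Lp E p μ) :=
  AddMonoidHomClass.continuous_of_bound
    (AddMonoidHom.mk' (indicatorConstLp p hs hμs) fun _ _ => indicatorConstLp_add.symm)
    (μ.real s ^ (1 / p.toReal)) fun c => by
      simpa [mul_comm] using norm_indicatorConstLp_le (c := c)

theorem isCompact_image_sum_indicatorConstLp {ι : Type*} [Fintype ι] {s : ι → Set α}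
    (hs : ∀ i, MeasurableSet (s i)) (hμs : ∀ i, μ (s i) ≠ ∞) {K : Set E} (hK : IsCompact K) :
    IsCompact ((fun v : ι → E => ∑ i, indicatorConstLp p (hs i) (hμs i) (v i)) ''
      univ.pi fun _ => K) :=
  (isCompact_univ_pi fun _ => hK).image <| continuous_finsetSum _ fun i _ =>
    (continuous_indicatorConstLp (hs i) (hμs i)).comp (continuous_apply i)

theorem exists_strictMono_tendsto_eLpNorm_of_approx [CompleteSpace E] {f : ℕ → α → E}
    (hf : ∀ n, MemLp (f n) p μ)
    (happrox : ∀ ε > 0, ∃ t : Set (Lp E p μ), TotallyBounded t ∧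
      ∀ n, ∃ y ∈ t, eLpNorm (f n - ⇑y) p μ ≤ ENNReal.ofReal ε) :
    ∃ φ : ℕ → ℕ, StrictMono φ ∧ ∃ flim : α → E, AEStronglyMeasurable flim μ ∧
      Tendsto (fun k => eLpNorm (f (φ k) - flim) p μ) atTop (𝓝 0) := by
  set F : ℕ → Lp E p μ := fun n => (hf n).toLp (f n)
  have hdist : ∀ n (y : Lp E p μ), dist (F n) y = (eLpNorm (f n - ⇑y) p μ).toReal := fun n y => by
    rw [Lp.dist_def, eLpNorm_congr_ae ((hf n).coeFn_toLp.sub EventuallyEq.rfl)]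
  have hF : TotallyBounded (range F) := by
    refine totallyBounded_of_forall_exists_dist_lt fun ε hε => ?_
    obtain ⟨t, ht, hy⟩ := happrox (ε / 2) (half_pos hε)
    refine ⟨t, ht, forall_mem_range.2 fun n => ?_⟩
    obtain ⟨y, hyt, hny⟩ := hy n
    refine ⟨y, hyt, ?_⟩
    rw [hdist]
    exact (ENNReal.toReal_le_of_le_ofReal (half_pos hε).le hny).trans_lt (half_lt_self hε)
  obtain ⟨flim, -, φ, hφ, hlim⟩ := (hF.closure.isCompact_of_isClosed isClosed_closure).isSeqCompact
    fun n => subset_closure (mem_range_self n)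
  refine ⟨φ, hφ, flim, Lp.aestronglyMeasurable flim, ?_⟩
  refine ((Lp.tendsto_Lp_iff_tendsto_eLpNorm' _ _).1 hlim).congr fun k => ?_
  exact eLpNorm_congr_ae ((hf (φ k)).coeFn_toLp.sub EventuallyEq.rfl)

end LpCompactness

section CompactEmbedding

variable {B0 B B1 : Type*}
  [NormedAddCommGroup B0] [NormedSpace ℝ B0] [CompleteSpace B0]
  [NormedAddCommGroup B] [NormedSpace ℝ B]
  [NormedAddCommGroup B1] [NormedSpace ℝ B1] [CompleteSpace B1]

theorem eLpNorm_comp_sub_stepAverage_uniformCell_le (i0 : B0 →L[ℝ] B) (i1 : B →L[ℝ] B1)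
    {δ C : ℝ} (hδ : 0 ≤ δ) (hC₀ : 0 ≤ C) (hC : ∀ x, ‖i0 x‖ ≤ δ * ‖x‖ + C * ‖i1 (i0 x)‖)
    {T : ℝ} (hT : 0 < T) {k : ℕ} (hk : k ≠ 0) {p : ℝ} (hp : 1 ≤ p) {α : ℝ} (hα : 0 ≤ α)
    {f : ℝ → B0} (hf : MemLp f (ENNReal.ofReal p) (volume.restrict (Ioc 0 T))) :
    eLpNorm (fun t => i0 (f t) - i0 (stepAverage volume (uniformCell T k) f t))
      (ENNReal.ofReal p) (volume.restrict (Ioc 0 T))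
      ≤ ENNReal.ofReal δ * (2 * eLpNorm f (ENNReal.ofReal p) (volume.restrict (Ioc 0 T)))
        + ENNReal.ofReal C * (ENNReal.ofReal ((T / k) ^ α)
          * gagliardoIntegral (Ioc 0 T) α p (fun t => i1 (i0 (f t))) ^ p⁻¹) := by
  have hq : 1 ≤ ENNReal.ofReal p := ENNReal.one_le_ofReal.2 hp
  have : IsFiniteMeasure (volume.restrict (Ioc 0 T)) := isFiniteMeasure_restrict.2 (by simp)
  have hint : IntegrableOn f (Ioc 0 T) := hf.integrable hq
  set P := stepAverage volume (uniformCell T k) f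
  have hPm : AEStronglyMeasurable P (volume.restrict (Ioc 0 T)) :=
    (stronglyMeasurable_stepAverage fun _ => measurableSet_Ioc).aestronglyMeasurable
  have hcomm : (fun t => i1 (i0 (f t - P t))) = fun t => i1 (i0 (f t))
      - stepAverage volume (uniformCell T k) (fun u => i1 (i0 (f u))) t := funext fun t => by
    rw [map_sub, map_sub]
    exact congrArg _ ((i1.comp i0).map_stepAverage
      (fun j => hint.mono_set (iUnion_uniformCell hT.le hk ▸ subset_iUnion _ j)) t)
  calc eLpNorm (fun t => i0 (f t) - i0 (P t)) (ENNReal.ofReal p) (volume.restrict (Ioc 0 T))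
      ≤ ENNReal.ofReal δ * eLpNorm (fun t => f t - P t) (ENNReal.ofReal p)
          (volume.restrict (Ioc 0 T))
        + ENNReal.ofReal C * eLpNorm (fun t => i1 (i0 (f t - P t))) (ENNReal.ofReal p)
          (volume.restrict (Ioc 0 T)) :=
        eLpNorm_le_add_of_norm_le (hf.1.sub hPm)
          ((i1.comp i0).continuous.comp_aestronglyMeasurable (hf.1.sub hPm)) hq hδ hC₀
          fun t => by rw [← map_sub]; exact hC _
    _ ≤ _ := by
        gcongr
        · refine (eLpNorm_sub_le hf.1 hPm hq).trans ?_
          rw [two_mul]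
          gcongr
          exact eLpNorm_stepAverage_uniformCell_le hT hk hf.1 hp
        · rw [hcomm]
          exact eLpNorm_sub_stepAverage_uniformCell_le hT hk
            ((i1.comp i0).integrable_comp hint) hα hp

theorem exists_eLpNorm_sub_stepAverage_uniformCell_le (i0 : B0 →L[ℝ] B) (i1 : B →L[ℝ] B1)
    (hi1 : Injective i1)
    (hcompact : ∀ s : Set B0, Bornology.IsBounded s → IsCompact (closure (i0 '' s)))
    {T : ℝ} (hT : 0 < T) {p : ℝ} (hp : 1 ≤ p) {α : ℝ} (hα : 0 < α) {g : ℕ → ℝ → B0}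
    (hmeas : ∀ n, AEStronglyMeasurable (g n) (volume.restrict (Ioc 0 T)))
    {M : ℝ≥0∞} (hM : M ≠ ∞) (hbound1 : ∀ n, ∫⁻ t in Ioc 0 T, ‖g n t‖ₑ ^ p ≤ M)
    (hbound2 : ∀ n, gagliardoIntegral (Ioc 0 T) α p (fun t => i1 (i0 (g n t))) ≤ M)
    {ε : ℝ} (hε : 0 < ε) :
    ∃ k ≠ 0, ∀ n, eLpNorm (fun t => i0 (g n t) - i0 (stepAverage volume (uniformCell T k) (g n) t))
      (ENNReal.ofReal p) (volume.restrict (Ioc 0 T)) ≤ ENNReal.ofReal ε := by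
  have hp₀ : 0 < p := zero_lt_one.trans_le hp
  set m := (M ^ p⁻¹).toReal
  have hm : M ^ p⁻¹ = ENNReal.ofReal m :=
    (ENNReal.ofReal_toReal (ENNReal.rpow_ne_top_of_nonneg (by positivity) hM)).symm
  have hm₀ : 0 ≤ m := ENNReal.toReal_nonneg
  set δ := ε / (4 * (m + 1))
  obtain ⟨C, hC₀, hC⟩ := exists_ehrling_bound i0 i1 hi1 hcompact (ε := δ) (by positivity)
  have hmesh : Tendsto (fun k : ℕ => C * ((T / k) ^ α * m)) atTop (𝓝 0) := by
    have := (((tendsto_const_div_atTop_nhds_zero_nat T).rpow_const (Or.inr hα.le)).const_mul C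
      ).mul_const m
    simpa [mul_assoc, Real.zero_rpow hα.ne'] using this
  obtain ⟨k, hkε, hk⟩ := ((hmesh.eventually (gt_mem_nhds (half_pos hε))).and
    (eventually_ne_atTop 0)).exists
  refine ⟨k, hk, fun n => (eLpNorm_comp_sub_stepAverage_uniformCell_le i0 i1 (by positivity) hC₀
    hC hT hk hp hα.le (memLp_ofReal_of_lintegral_le (hmeas n) hp₀ hM (hbound1 n))).trans ?_⟩
  calc _ ≤ ENNReal.ofReal δ * (2 * ENNReal.ofReal m)
        + ENNReal.ofReal C * (ENNReal.ofReal ((T / k) ^ α) * ENNReal.ofReal m) := by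
        rw [← hm]
        gcongr
        · exact eLpNorm_ofReal_le_of_lintegral_le hp₀ (hbound1 n)
        · exact hbound2 n
    _ = ENNReal.ofReal (δ * (2 * m) + C * ((T / k) ^ α * m)) := by
        rw [ENNReal.ofReal_add (by positivity) (by positivity), ENNReal.ofReal_mul (by positivity),
          ENNReal.ofReal_mul (by positivity), ENNReal.ofReal_mul hC₀,
          ENNReal.ofReal_mul (by positivity), ENNReal.ofReal_ofNat]
    _ ≤ ENNReal.ofReal ε := by
        refine ENNReal.ofReal_le_ofReal ?_
        have : δ * (2 * m) ≤ ε / 2 := by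
          rw [div_mul_eq_mul_div, div_le_div_iff₀ (by positivity) two_pos]
          nlinarith
        linarith

theorem exists_strictMono_tendsto_eLpNorm_of_gagliardoIntegral_le [CompleteSpace B]
    (i0 : B0 →L[ℝ] B) (i1 : B →L[ℝ] B1) (hi1 : Injective i1)
    (hcompact : ∀ s : Set B0, Bornology.IsBounded s → IsCompact (closure (i0 '' s)))
    {T : ℝ} (hT : 0 < T) {p : ℝ} (hp : 1 ≤ p) {α : ℝ} (hα : 0 < α) {g : ℕ → ℝ → B0}
    (hmeas : ∀ n, AEStronglyMeasurable (g n) (volume.restrict (Ioc 0 T)))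
    {M : ℝ≥0∞} (hM : M ≠ ∞) (hbound1 : ∀ n, ∫⁻ t in Ioc 0 T, ‖g n t‖ₑ ^ p ≤ M)
    (hbound2 : ∀ n, gagliardoIntegral (Ioc 0 T) α p (fun t => i1 (i0 (g n t))) ≤ M) :
    ∃ φ : ℕ → ℕ, StrictMono φ ∧ ∃ glim : ℝ → B,
      AEStronglyMeasurable glim (volume.restrict (Ioc 0 T)) ∧
      Tendsto (fun k => eLpNorm ((fun t => i0 (g (φ k) t)) - glim) (ENNReal.ofReal p)
        (volume.restrict (Ioc 0 T))) atTop (𝓝 0) := by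
  have hp₀ : 0 < p := zero_lt_one.trans_le hp
  have hq : 1 ≤ ENNReal.ofReal p := ENNReal.one_le_ofReal.2 hp
  have : Fact (1 ≤ ENNReal.ofReal p) := ⟨hq⟩
  have hmem : ∀ n, MemLp (g n) (ENNReal.ofReal p) (volume.restrict (Ioc 0 T)) := fun n =>
    memLp_ofReal_of_lintegral_le (hmeas n) hp₀ hM (hbound1 n)
  refine exists_strictMono_tendsto_eLpNorm_of_approx (f := fun n t => i0 (g n t))
    (fun n => i0.comp_memLp' (hmem n)) fun ε hε => ?_
  obtain ⟨k, hk, happrox⟩ := exists_eLpNorm_sub_stepAverage_uniformCell_le i0 i1 hi1 hcompact hT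
    hp hα hmeas hM hbound1 hbound2 hε
  have hcells : ∀ n j, IntegrableOn (g n) (uniformCell T k j) := fun n j =>
    IntegrableOn.mono_set ((hmem n).integrable hq)
      (iUnion_uniformCell hT.le hk ▸ subset_iUnion _ j)
  have hvol : ∀ j, volume.restrict (Ioc 0 T) (uniformCell T k j) ≠ ∞ := fun j =>
    ((Measure.restrict_apply_le _ _).trans_lt (by simp [volume_uniformCell])).ne
  set R := ((ENNReal.ofReal (T / k))⁻¹ * M) ^ p⁻¹
  have hR : R ≠ ∞ := ENNReal.rpow_ne_top_of_nonneg (by positivity)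
    (ENNReal.mul_ne_top (ENNReal.inv_ne_top.2 (by simp; positivity)) hM)
  have havg : ∀ n j, ‖⨍ u in uniformCell T k j, g n u‖ₑ ≤ R := fun n j =>
    (enorm_setAverage_uniformCell_le hT hk (hmeas n) hp j).trans
      (ENNReal.rpow_le_rpow (mul_le_mul_right (hbound1 n) _) (by positivity))
  have hK : IsCompact (closure (i0 '' {x : B0 | ‖x‖ₑ ≤ R})) :=
    hcompact _ (isBounded_iff_forall_norm_le.2 ⟨R.toReal, fun x hx => by
      rw [← toReal_enorm]; exact ENNReal.toReal_mono hR hx⟩)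
  set Φ : (Fin k → B) → Lp B (ENNReal.ofReal p) (volume.restrict (Ioc 0 T)) := fun v =>
    ∑ j, indicatorConstLp _ measurableSet_Ioc (hvol j) (v j)
  refine ⟨Φ '' univ.pi fun _ => closure (i0 '' {x : B0 | ‖x‖ₑ ≤ R}),
    (isCompact_image_sum_indicatorConstLp (fun _ => measurableSet_Ioc) hvol hK).totallyBounded,
    fun n => ⟨Φ fun j => ⨍ u in uniformCell T k j, i0 (g n u),
      mem_image_of_mem _ fun j _ => ?_, ?_⟩⟩
  · rw [← i0.map_setAverage (hcells n j)]
    exact subset_closure (mem_image_of_mem _ (havg n j))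
  · refine le_of_eq_of_le (eLpNorm_congr_ae ?_) (happrox n)
    filter_upwards [coeFn_sum_indicatorConstLp_setAverage (p := ENNReal.ofReal p) (μ := volume)
      (I := uniformCell T k) (f := fun t => i0 (g n t)) (fun _ => measurableSet_Ioc) hvol]
      with t ht
    exact congrArg (i0 (g n t) - ·) (ht.trans (i0.map_stepAverage (hcells n) t).symm)

end CompactEmbedding

theorem stmt_0_general
    {B0 B B1 : Type*}
    [NormedAddCommGroup B0] [NormedSpace ℝ B0] [CompleteSpace B0]
    [NormedAddCommGroup B] [NormedSpace ℝ B] [CompleteSpace B]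
    [NormedAddCommGroup B1] [NormedSpace ℝ B1] [CompleteSpace B1]
    (i0 : B0 →L[ℝ] B)
    (i1 : B →L[ℝ] B1) (hi1 : Function.Injective i1)
    (hcompact : ∀ s : Set B0, Bornology.IsBounded s → IsCompact (closure (⇑i0 '' s)))
    (T : ℝ) (hT : 0 < T) (p : ℝ) (hp : 1 < p) (α : ℝ) (hα : α ∈ Set.Ioo (0:ℝ) 1)
    (g : ℕ → ℝ → B0)
    (hmeas : ∀ n, AEStronglyMeasurable (g n) (volume.restrict (Set.Ioc 0 T)))
    (M : ℝ≥0∞) (hM : M < ⊤)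
    (hbound1 : ∀ n, (∫⁻ t in Set.Ioc 0 T, (‖g n t‖₊ : ℝ≥0∞) ^ p) ≤ M)
    (hbound2 : ∀ n, (∫⁻ t in Set.Ioc 0 T, ∫⁻ s in Set.Ioc 0 T,
        (‖i1 (i0 (g n t)) - i1 (i0 (g n s))‖₊ : ℝ≥0∞) ^ p
          / ENNReal.ofReal (|t - s| ^ (1 + α * p))) ≤ M) :
    ∃ φ : ℕ → ℕ, StrictMono φ ∧ ∃ glim : ℝ → B,
      AEStronglyMeasurable glim (volume.restrict (Set.Ioc 0 T)) ∧
      Tendsto (fun k => ∫⁻ t in Set.Ioc 0 T,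
        (‖i0 (g (φ k) t) - glim t‖₊ : ℝ≥0∞) ^ p) atTop (𝓝 0) := by
  have hp₀ : 0 < p := zero_lt_one.trans hp
  obtain ⟨φ, hφ, glim, hglim, hlim⟩ := exists_strictMono_tendsto_eLpNorm_of_gagliardoIntegral_le
    i0 i1 hi1 hcompact hT hp.le hα.1 hmeas hM.ne hbound1 hbound2
  have hpow : Tendsto (fun x : ℝ≥0∞ => x ^ p) (𝓝 0) (𝓝 0) := by
    simpa [ENNReal.zero_rpow_of_pos hp₀] using (ENNReal.continuous_rpow_const (y := p)).tendsto 0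
  exact ⟨φ, hφ, glim, hglim, (hpow.comp hlim).congr fun k => eLpNorm_ofReal_rpow_eq_lintegral hp₀⟩

/-- Compact embedding `L^p(0,T;B₀) ∩ W^{α,p}(0,T;B₁) ⋐ L^p(0,T;B)` (Flandoli–Gątarek):
if `B₀ ⊂ B ⊂ B₁` are Banach spaces with continuous injective embeddings, `B₀, B₁`
reflexive (the canonical map into the double dual is surjective), the embedding
`B₀ ↪ B` compact (bounded sets have compact closure of their image), `p ∈ (1,∞)`,
`α ∈ (0,1)`, then any sequence `gₙ : [0,T] → B₀` with uniformly bounded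
`L^p(0,T;B₀)`-norm and `W^{α,p}(0,T;B₁)`-seminorm has a subsequence converging
in `L^p(0,T;B)`. -/
theorem stmt_0
    {B0 B B1 : Type*}
    [NormedAddCommGroup B0] [NormedSpace ℝ B0] [CompleteSpace B0]
    [NormedAddCommGroup B] [NormedSpace ℝ B] [CompleteSpace B]
    [NormedAddCommGroup B1] [NormedSpace ℝ B1] [CompleteSpace B1]
    (i0 : B0 →L[ℝ] B) (hi0 : Function.Injective i0)
    (i1 : B →L[ℝ] B1) (hi1 : Function.Injective i1)
    (hrefl0 : Function.Surjective ⇑(NormedSpace.inclusionInDoubleDual ℝ B0))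
    (hrefl1 : Function.Surjective ⇑(NormedSpace.inclusionInDoubleDual ℝ B1))
    (hcompact : ∀ s : Set B0, Bornology.IsBounded s → IsCompact (closure (⇑i0 '' s)))
    (T : ℝ) (hT : 0 < T) (p : ℝ) (hp : 1 < p) (α : ℝ) (hα : α ∈ Set.Ioo (0:ℝ) 1)
    (g : ℕ → ℝ → B0)
    (hmeas : ∀ n, AEStronglyMeasurable (g n) (volume.restrict (Set.Ioc 0 T)))
    (M : ℝ≥0∞) (hM : M < ⊤)
    (hbound1 : ∀ n, (∫⁻ t in Set.Ioc 0 T, (‖g n t‖₊ : ℝ≥0∞) ^ p) ≤ M)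
    (hbound2 : ∀ n, (∫⁻ t in Set.Ioc 0 T, ∫⁻ s in Set.Ioc 0 T,
        (‖i1 (i0 (g n t)) - i1 (i0 (g n s))‖₊ : ℝ≥0∞) ^ p
          / ENNReal.ofReal (|t - s| ^ (1 + α * p))) ≤ M) :
    ∃ φ : ℕ → ℕ, StrictMono φ ∧ ∃ glim : ℝ → B,
      AEStronglyMeasurable glim (volume.restrict (Set.Ioc 0 T)) ∧
      Tendsto (fun k => ∫⁻ t in Set.Ioc 0 T,
        (‖i0 (g (φ k) t) - glim t‖₊ : ℝ≥0∞) ^ p) atTop (𝓝 0) :=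
  stmt_0_general i0 i1 hi1 hcompact T hT p hp α hα g hmeas M hM hbound1 hbound2
end

section
/- (Gyöngy–Krylov criterion) Let $(X_n)_{n\in\mathbb{N}}$ be a sequence of random variables from a probability space $(\Omega,\mathcal{F},\mathbb{P})$ to a complete separable metric space $(E,d)$. Assume that for every pair of subsequences $(n_1(k), n_2(k))_{k}$ with $n_1(k) \ge n_2(k)$ for every $k$, there is a further subsequence $(k(h))_h$ such that the $E\times E$-valued random variables $(X_{n_1(k(h))}, X_{n_2(k(h))})$ converge in law, as $h \to \infty$, to a probability measure $\mu$ on $E \times E$ satisfying $\mu(\{(x,y) \in E\times E : x = y\}) = 1$. Then there exists a random variable $X : \Omega \to E$ such that $X_n$ converges to $X$ in probability. -/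
open MeasureTheory Filter Topology

/-- The joint law of `(f, g)` under `P`, as a probability measure on `E × E`. -/
noncomputable def jointLaw {Ω E : Type*} [MeasurableSpace Ω] [MeasurableSpace E]
    (P : Measure Ω) [IsProbabilityMeasure P] (f g : Ω → E)
    (hf : Measurable f) (hg : Measurable g) : ProbabilityMeasure (E × E) :=
  ⟨P.map (fun ω => (f ω, g ω)), Measure.isProbabilityMeasure_map (hf.prodMk hg).aemeasurable⟩

/-!
Weak convergence of the joint laws to a measure carried by the diagonal, tested on the closed set
`{ε ≤ d(x, y)}` (portmanteau), gives `P(ε ≤ d(X_{n₁(k)}, X_{n₂(k)})) → 0` along a further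
subsequence of any pair of subsequences; by the subsequence principle, `(Xₙ)` is Cauchy in
probability. A sequence that is Cauchy in probability has a subsequence whose consecutive
distances have summable tail probabilities, so by Borel–Cantelli it is almost surely Cauchy and
converges almost surely in the complete space `E`; the Cauchy property then transfers convergence
in probability from the subsequence to the whole sequence.
-/

namespace Filter

theorem exists_strictMono_comp_pair {u v : ℕ → ℕ} (hu : Tendsto u atTop atTop)
    (hv : Tendsto v atTop atTop) : ∃ φ : ℕ → ℕ, StrictMono (u ∘ φ) ∧ StrictMono (v ∘ φ) := by
  obtain ⟨φ, hφ, hvφ⟩ := strictMono_subseq_of_tendsto_atTop hv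
  obtain ⟨ψ, hψ, huψ⟩ := strictMono_subseq_of_tendsto_atTop (hu.comp hφ.tendsto_atTop)
  exact ⟨φ ∘ ψ, huψ, hvφ.comp hψ⟩

theorem tendsto_atTop_prod_of_forall_subseq {β : Type*} [TopologicalSpace β] {F : ℕ → ℕ → β}
    {y : β} (hF : ∀ a b, F a b = F b a)
    (h : ∀ n₁ n₂ : ℕ → ℕ, StrictMono n₁ → StrictMono n₂ → (∀ k, n₂ k ≤ n₁ k) →
      ∃ ks : ℕ → ℕ, Tendsto (fun k => F (n₁ (ks k)) (n₂ (ks k))) atTop (𝓝 y)) :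
    Tendsto (fun p : ℕ × ℕ => F p.1 p.2) atTop (𝓝 y) := by
  refine tendsto_of_subseq_tendsto fun ns hns => ?_
  -- by symmetry of `F`, each pair may be reordered as `(max, min)`
  have hmin : Tendsto (fun k => min (ns k).1 (ns k).2) atTop atTop :=
    (tendsto_atTop_atTop_of_monotone (monotone_fst.min monotone_snd) fun N =>
      ⟨(N, N), (min_self N).ge⟩).comp hns
  have hmax : Tendsto (fun k => max (ns k).1 (ns k).2) atTop atTop :=
    tendsto_atTop_mono (fun _ => min_le_max) hmin
  obtain ⟨φ, hmaxφ, hminφ⟩ := exists_strictMono_comp_pair hmax hmin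
  obtain ⟨ks, hks⟩ := h _ _ hmaxφ hminφ fun _ => min_le_max
  refine ⟨φ ∘ ks, hks.congr fun k => ?_⟩
  rcases le_total (ns (φ (ks k))).1 (ns (φ (ks k))).2 with hle | hle
  · simp only [Function.comp_apply, max_eq_right hle, min_eq_left hle, hF]
  · simp only [Function.comp_apply, max_eq_left hle, min_eq_right hle]

end Filter

namespace MeasureTheory

theorem jointLaw_apply {Ω E : Type*} [MeasurableSpace Ω] [MeasurableSpace E]
    (P : Measure Ω) [IsProbabilityMeasure P] {f g : Ω → E} (hf : Measurable f)
    (hg : Measurable g) {s : Set (E × E)} (hs : MeasurableSet s) :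
    (jointLaw P f g hf hg : Measure (E × E)) s = P ((fun ω => (f ω, g ω)) ⁻¹' s) :=
  Measure.map_apply (hf.prodMk hg) hs

theorem ProbabilityMeasure.tendsto_measure_le_dist_of_diagonal_eq_one {E ι : Type*}
    [MetricSpace E] [SecondCountableTopology E] [MeasurableSpace E] [OpensMeasurableSpace E]
    {L : Filter ι} {ν : ι → ProbabilityMeasure (E × E)} {μ : ProbabilityMeasure (E × E)}
    (hμ : μ {q : E × E | q.1 = q.2} = 1) (hν : Tendsto ν L (𝓝 μ)) {ε : ℝ} (hε : 0 < ε) :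
    Tendsto (fun i => (ν i : Measure (E × E)) {q | ε ≤ dist q.1 q.2}) L (𝓝 0) := by
  have hclosed : IsClosed {q : E × E | ε ≤ dist q.1 q.2} :=
    isClosed_le continuous_const continuous_dist
  have hdiag : MeasurableSet {q : E × E | q.1 = q.2} :=
    (isClosed_eq continuous_fst continuous_snd).measurableSet
  have hnull : (μ : Measure (E × E)) {q | ε ≤ dist q.1 q.2} = 0 := by
    refine measure_mono_null (t := {q : E × E | q.1 = q.2}ᶜ) (fun q hq hqd => ?_)
      ((prob_compl_eq_zero_iff hdiag).2 ?_)
    · exact (hε.trans_le hq).ne' (dist_eq_zero.2 hqd)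
    · rw [← ProbabilityMeasure.ennreal_coeFn_eq_coeFn_toMeasure, hμ, ENNReal.coe_one]
  have hlimsup := ProbabilityMeasure.limsup_measure_closed_le_of_tendsto hν hclosed
  rw [hnull] at hlimsup
  exact ENNReal.tendsto_nhds_zero.2 fun δ hδ =>
    (eventually_lt_of_limsup_lt (hlimsup.trans_lt hδ)).mono fun _ => le_of_lt

variable {α E : Type*} {m : MeasurableSpace α} {μ : Measure α} [PseudoMetricSpace E]

def CauchyInMeasure (μ : Measure α) (f : ℕ → α → E) : Prop :=
  ∀ ε : ℝ, 0 < ε →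
    Tendsto (fun p : ℕ × ℕ => μ {x | ε ≤ dist (f p.1 x) (f p.2 x)}) atTop (𝓝 0)

theorem measure_le_dist_le_add (f g h : α → E) (ε : ℝ) :
    μ {x | ε ≤ dist (f x) (h x)} ≤
      μ {x | ε / 2 ≤ dist (f x) (g x)} + μ {x | ε / 2 ≤ dist (g x) (h x)} := by
  refine (measure_mono fun x hx => ?_).trans (measure_union_le _ _)
  by_contra hx'
  simp only [Set.mem_union, Set.mem_ofPred_eq, not_or, not_le] at hx hx'
  linarith [dist_triangle (f x) (g x) (h x)]

theorem ae_cauchySeq_of_tsum_measure_le_dist_ne_top {g : ℕ → α → E} {ε : ℕ → ℝ}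
    (hε : Summable ε) (hμ : ∑' k, μ {x | ε k ≤ dist (g k x) (g (k + 1) x)} ≠ ⊤) :
    ∀ᵐ x ∂μ, CauchySeq fun k => g k x := by
  filter_upwards [ae_eventually_notMem hμ] with x hx
  refine cauchySeq_of_summable_dist (Summable.of_norm_bounded_eventually hε ?_)
  rw [Nat.cofinite_eq_atTop]
  filter_upwards [hx] with k hk
  rw [Real.norm_of_nonneg dist_nonneg]
  exact (not_le.1 hk).le

namespace CauchyInMeasure

variable {f : ℕ → α → E}

theorem exists_strictMono_measure_le_dist_le (hf : CauchyInMeasure μ f) :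
    ∃ φ : ℕ → ℕ, StrictMono φ ∧
      ∀ k, μ {x | (1 / 2 : ℝ) ^ k ≤ dist (f (φ k) x) (f (φ (k + 1)) x)} ≤ 2⁻¹ ^ k := by
  have hN : ∀ k, ∃ N, ∀ m n, N ≤ m → N ≤ n →
      μ {x | (1 / 2 : ℝ) ^ k ≤ dist (f m x) (f n x)} ≤ 2⁻¹ ^ k := fun k =>
    eventually_atTop_prod_self.1 <|
      ENNReal.tendsto_nhds_zero.1 (hf _ (by positivity)) _ (ENNReal.pow_pos (by norm_num) k)
  choose N hN using hN
  obtain ⟨φ, hφ, hNφ⟩ := extraction_forall_of_eventually' (P := fun k n => N k ≤ n)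
    fun k => ⟨N k, fun _ => id⟩
  exact ⟨φ, hφ, fun k => hN k _ _ (hNφ k) ((hNφ k).trans (hφ.monotone k.le_succ))⟩

theorem tendstoInMeasure_of_comp {g : α → E} {φ : ℕ → ℕ} (hf : CauchyInMeasure μ f)
    (hφ : Tendsto φ atTop atTop) (hfg : TendstoInMeasure μ (fun k => f (φ k)) atTop g) :
    TendstoInMeasure μ f atTop g := by
  rw [tendstoInMeasure_iff_dist] at hfg ⊢
  intro ε hε
  have hpair : Tendsto (fun n => μ {x | ε / 2 ≤ dist (f n x) (f (φ n) x)}) atTop (𝓝 0) :=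
    (hf _ (half_pos hε)).comp <| by rw [← prod_atTop_atTop_eq]; exact tendsto_id.prodMk hφ
  refine tendsto_of_tendsto_of_tendsto_of_le_of_le tendsto_const_nhds
    (by simpa using hpair.add (hfg _ (half_pos hε))) (fun _ => zero_le)
    fun n => measure_le_dist_le_add _ (f (φ n)) _ ε

theorem exists_tendstoInMeasure [CompleteSpace E] [IsFiniteMeasure μ]
    (hfm : ∀ n, AEStronglyMeasurable (f n) μ) (hf : CauchyInMeasure μ f) :
    ∃ g : α → E, StronglyMeasurable g ∧ TendstoInMeasure μ f atTop g := by
  obtain ⟨φ, hφ, hφμ⟩ := hf.exists_strictMono_measure_le_dist_le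
  have hsum : ∑' k, μ {x | (1 / 2 : ℝ) ^ k ≤ dist (f (φ k) x) (f (φ (k + 1)) x)} ≠ ⊤ :=
    ne_top_of_le_ne_top (by simp [ENNReal.tsum_geometric]) (ENNReal.tsum_le_tsum hφμ)
  have hae : ∀ᵐ x ∂μ, ∃ l, Tendsto (fun k => f (φ k) x) atTop (𝓝 l) :=
    (ae_cauchySeq_of_tsum_measure_le_dist_ne_top summable_geometric_two hsum).mono
      fun _ => cauchySeq_tendsto_of_complete
  obtain ⟨g, hg, hfg⟩ := exists_stronglyMeasurable_limit_of_tendsto_ae (fun k => hfm (φ k)) hae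
  exact ⟨g, hg, hf.tendstoInMeasure_of_comp hφ.tendsto_atTop
    (tendstoInMeasure_of_tendsto_ae (fun k => hfm (φ k)) hfg)⟩

end CauchyInMeasure

end MeasureTheory

/-- Gyöngy–Krylov criterion: if for every pair of subsequences `(X_{n₁(k)}, X_{n₂(k)})`
with `n₁(k) ≥ n₂(k)` there is a further subsequence along which the joint laws converge
weakly to a measure `μ` on `E × E` concentrated on the diagonal, then `Xₙ` converges in
probability to some random variable `X`. -/
theorem stmt_2
    {Ω : Type*} [MeasurableSpace Ω] (P : Measure Ω) [IsProbabilityMeasure P]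
    {E : Type*} [MetricSpace E] [CompleteSpace E] [TopologicalSpace.SeparableSpace E]
    [MeasurableSpace E] [BorelSpace E]
    (X : ℕ → Ω → E) (hX : ∀ n, Measurable (X n))
    (h : ∀ n1 n2 : ℕ → ℕ, StrictMono n1 → StrictMono n2 → (∀ k, n2 k ≤ n1 k) →
      ∃ (ks : ℕ → ℕ) (μ : ProbabilityMeasure (E × E)), StrictMono ks ∧
        μ {q : E × E | q.1 = q.2} = 1 ∧
        Tendsto (fun m => jointLaw P (X (n1 (ks m))) (X (n2 (ks m)))
          (hX (n1 (ks m))) (hX (n2 (ks m)))) atTop (𝓝 μ)) :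
    ∃ Xlim : Ω → E, Measurable Xlim ∧ TendstoInMeasure P X atTop Xlim := by
  have : SecondCountableTopology E := UniformSpace.secondCountable_of_separable E
  have hcauchy : CauchyInMeasure P X := fun ε hε =>
    tendsto_atTop_prod_of_forall_subseq (F := fun a b => P {ω | ε ≤ dist (X a ω) (X b ω)})
      (fun a b => by simp only [dist_comm])
      fun n₁ n₂ hn₁ hn₂ hn => by
        obtain ⟨ks, μ, -, hdiag, hconv⟩ := h n₁ n₂ hn₁ hn₂ hn
        refine ⟨ks, ?_⟩
        simpa only [jointLaw_apply _ _ _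
          (isClosed_le continuous_const continuous_dist).measurableSet,
          Set.preimage_ofPred_eq] using
          ProbabilityMeasure.tendsto_measure_le_dist_of_diagonal_eq_one hdiag hconv hε
  obtain ⟨Xlim, hXlim, hconv⟩ :=
    hcauchy.exists_tendstoInMeasure fun n => (hX n).aestronglyMeasurable
  exact ⟨Xlim, hXlim.measurable, hconv⟩
end

section
/- Let $L > 0$, $T > 0$ and $0 \le \theta < 1/8$, and for $(k,l) \in \mathbb{Z}^2$ set $w_{k,l} = (1-(\pi k/L)^2)^2 + (\pi l/L)^2 + 1$. Then there exists a constant $C = C(\theta, T, L) > 0$ such that for all $0 \le s < t \le T$, $\sum_{(k,l)\in\mathbb{Z}^2} \int_s^t w_{k,l}^{2\theta}\, e^{-2(t-u)(w_{k,l}-2)}\,du \;\le\; C\,(t-s)^{1/4 - 2\theta}$. -/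
/-
Each mode contributes at most `e^{4T} w^{2θ} min(τ, 1/(2w))`, where `τ = t - s`, and since
`w ≤ 1 / min(τ, 1/w)` this is at most `e^{4T} min(τ, 1/w)^{1-2θ}`. Splitting
`1 - 2θ = (3/8 - θ) + (5/8 - θ)` and using `(1-(πk/L)²)² + 1 ≳ k⁴ + 1`, `(πl/L)² + 1 ≳ l² + 1`,
the double sum is bounded by a product of one-dimensional sums `∑ₙ min(τ, 1/(|n|^d + 1))^q`
with `dq > 1`. Cutting such a sum at `n ≈ τ^{-1/d}` (about `τ^{-1/d}` terms of size at most `τ^q`,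
then a tail `∑ n^{-dq}` compared with an integral) bounds it by `C τ^{q - 1/d}`, and
`(3/8 - θ - 1/4) + (5/8 - θ - 1/2) = 1/4 - 2θ`.
-/

open scoped ENNReal

/-- The weight `w_{k,l} = (1-(πk/L)²)² + (πl/L)² + 1`, so that the eigenvalues of the
linearized anisotropic Swift–Hohenberg operator `𝓛₁` on `[-L,L]²` are `-(w_{k,l}-2)`. -/
noncomputable def shWeight (L : ℝ) (kl : ℤ × ℤ) : ℝ :=
  (1 - (Real.pi * (kl.1 : ℝ) / L) ^ 2) ^ 2 + (Real.pi * (kl.2 : ℝ) / L) ^ 2 + 1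

open MeasureTheory Set Real

lemma lintegral_exp_mul_sub_le {c s t : ℝ} (hc : 0 < c) :
    ∫⁻ u in Ioc s t, ENNReal.ofReal (exp (c * (u - t))) ≤ ENNReal.ofReal (min (t - s) c⁻¹) := by
  rw [ENNReal.ofReal_min]
  refine le_min ?_ ?_
  · calc ∫⁻ u in Ioc s t, ENNReal.ofReal (exp (c * (u - t)))
        ≤ ∫⁻ _ in Ioc s t, 1 := setLIntegral_mono measurable_const fun u hu =>
          ENNReal.ofReal_le_one.mpr (exp_le_one_iff.mpr
            (mul_nonpos_of_nonneg_of_nonpos hc.le (sub_nonpos.mpr hu.2)))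
      _ = ENNReal.ofReal (t - s) := by rw [setLIntegral_one, volume_Ioc]
  · calc ∫⁻ u in Ioc s t, ENNReal.ofReal (exp (c * (u - t)))
        ≤ ∫⁻ u in Iic t, ENNReal.ofReal (exp (-(c * t))) * ENNReal.ofReal (exp (c * u)) := by
          refine (lintegral_mono_set Ioc_subset_Iic_self).trans_eq (setLIntegral_congr_fun
            measurableSet_Iic fun u _ => ?_)
          rw [← ENNReal.ofReal_mul (exp_pos _).le, ← exp_add, mul_sub, neg_add_eq_sub]
      _ = ENNReal.ofReal c⁻¹ := by
          rw [lintegral_const_mul _ (by fun_prop), ← ofReal_integral_eq_lintegral_ofReal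
            (integrableOn_exp_mul_Iic hc t) (.of_forall fun _ => (exp_pos _).le),
            integral_exp_mul_Iic hc, ← ENNReal.ofReal_mul (exp_pos _).le, mul_div_assoc',
            ← exp_add, neg_add_cancel, exp_zero, one_div]

lemma rpow_mul_min_inv_le {w τ p : ℝ} (hw : 0 < w) (hτ : 0 < τ) (hp : 0 ≤ p) :
    w ^ p * min τ w⁻¹ ≤ min τ w⁻¹ ^ (1 - p) := by
  set m := min τ w⁻¹
  have hm : 0 < m := lt_min hτ (inv_pos.mpr hw)
  have hwm : w ≤ m⁻¹ := (le_inv_comm₀ hm hw).mp (min_le_right _ _)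
  calc w ^ p * m ≤ m⁻¹ ^ p * m := by gcongr
    _ = m ^ (1 - p) := by
      rw [inv_rpow hm.le, ← rpow_neg hm.le, rpow_sub hm, rpow_one, rpow_neg hm.le]; ring

lemma lintegral_rpow_mul_exp_le {w p s t : ℝ} (hw : 0 < w) (hp : 0 ≤ p) (hst : s < t) :
    ∫⁻ u in Ioc s t, ENNReal.ofReal (w ^ p * exp (-(2 * (t - u) * (w - 2))))
      ≤ ENNReal.ofReal (exp (4 * (t - s)) * min (t - s) w⁻¹ ^ (1 - p)) := by
  have hE : 0 ≤ exp (4 * (t - s)) * w ^ p := by positivity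
  calc ∫⁻ u in Ioc s t, ENNReal.ofReal (w ^ p * exp (-(2 * (t - u) * (w - 2))))
      ≤ ∫⁻ u in Ioc s t, ENNReal.ofReal (exp (4 * (t - s)) * w ^ p) *
          ENNReal.ofReal (exp (2 * w * (u - t))) := by
        refine setLIntegral_mono (by fun_prop) fun u hu => ?_
        rw [← ENNReal.ofReal_mul hE]
        refine ENNReal.ofReal_le_ofReal ?_
        have hsplit :
            exp (-(2 * (t - u) * (w - 2))) = exp (4 * (t - u)) * exp (2 * w * (u - t)) := by
          rw [← exp_add]; ring_nf
        rw [hsplit, ← mul_assoc, mul_comm (exp _) (w ^ p)]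
        gcongr
        exact hu.1.le
    _ ≤ ENNReal.ofReal (exp (4 * (t - s)) * w ^ p) * ENNReal.ofReal (min (t - s) (2 * w)⁻¹) := by
        rw [lintegral_const_mul _ (by fun_prop)]
        gcongr
        exact lintegral_exp_mul_sub_le (by positivity)
    _ ≤ ENNReal.ofReal (exp (4 * (t - s)) * min (t - s) w⁻¹ ^ (1 - p)) := by
        rw [← ENNReal.ofReal_mul hE, mul_assoc]
        refine ENNReal.ofReal_le_ofReal (mul_le_mul_of_nonneg_left ?_ (exp_pos _).le)
        calc w ^ p * min (t - s) (2 * w)⁻¹ ≤ w ^ p * min (t - s) w⁻¹ := by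
              gcongr; linarith
          _ ≤ _ := rpow_mul_min_inv_le hw (sub_pos.mpr hst) hp

lemma min_inv_rpow_add_le {τ A B q₁ q₂ : ℝ} (hτ : 0 < τ) (hA : 0 ≤ A) (hB : 0 ≤ B)
    (hq₁ : 0 ≤ q₁) (hq₂ : 0 ≤ q₂) :
    min τ (A + B + 1)⁻¹ ^ (q₁ + q₂) ≤ min τ (A + 1)⁻¹ ^ q₁ * min τ (B + 1)⁻¹ ^ q₂ := by
  have hm : 0 < min τ (A + B + 1)⁻¹ := lt_min hτ (by positivity)
  rw [rpow_add hm]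
  gcongr <;> linarith

lemma tsum_nat_add_rpow_neg_le {p : ℝ} (hp : 1 < p) {N : ℕ} (hN : 0 < N) :
    ∑' n : ℕ, ENNReal.ofReal (((n + N + 1 : ℕ) : ℝ) ^ (-p))
      ≤ ENNReal.ofReal ((N : ℝ) ^ (1 - p) / (p - 1)) := by
  have hN' : (0 : ℝ) < N := by exact_mod_cast hN
  have anti : AntitoneOn (fun x : ℝ => x ^ (-p)) (Ici (N : ℝ)) := fun x hx y _ hxy =>
    rpow_le_rpow_of_nonpos (hN'.trans_le hx) hxy (by linarith)
  have integrable : IntegrableOn (fun x : ℝ => x ^ (-p)) (Ioi (N : ℝ)) :=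
    integrableOn_Ioi_rpow_of_lt (by linarith) hN'
  have nonneg : ∀ x ∈ Ioi (N : ℝ), 0 ≤ x ^ (-p) := fun x hx =>
    rpow_nonneg (hN'.trans (mem_Ioi.mp hx)).le _
  have summable : Summable fun n : ℕ => ((n + N + 1 : ℕ) : ℝ) ^ (-p) :=
    (summable_nat_add_iff (N + 1)).mpr (anti.summable_of_integrableOn_Ioi integrable nonneg)
  rw [← ENNReal.ofReal_tsum_of_nonneg (fun n => by positivity) summable]
  refine ENNReal.ofReal_le_ofReal ((anti.tsum_comp_add_le_integral N integrable nonneg).trans_eq ?_)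
  rw [integral_Ioi_rpow_of_lt (by linarith) hN', neg_add_eq_sub, neg_div, ← div_neg, neg_sub]

lemma tsum_min_inv_rpow_nat_add_le {α q τ : ℝ} (hα : 0 < α) (hq : 1 < α * q) (hτ : 0 < τ)
    {N : ℕ} (hN : τ ^ (-α⁻¹) ≤ N) :
    ∑' n : ℕ, ENNReal.ofReal (min τ (((n + (N + 1) : ℕ) : ℝ) ^ α + 1)⁻¹ ^ q)
      ≤ ENNReal.ofReal ((α * q - 1)⁻¹ * τ ^ (q - α⁻¹)) := by
  have hq0 : 0 < q := pos_of_mul_pos_right (one_pos.trans hq) hα.le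
  have hx0 : 0 < τ ^ (-α⁻¹) := rpow_pos_of_pos hτ _
  have hterm : ∀ y : ℝ, 0 < y → min τ (y ^ α + 1)⁻¹ ^ q ≤ y ^ (-(α * q)) := fun y hy => by
    calc min τ (y ^ α + 1)⁻¹ ^ q ≤ (y ^ α)⁻¹ ^ q :=
          rpow_le_rpow (le_min hτ.le (by positivity))
            ((min_le_right _ _).trans (inv_anti₀ (by positivity) (by linarith))) hq0.le
      _ = y ^ (-(α * q)) := by rw [← rpow_neg hy.le, ← rpow_mul hy.le, neg_mul]
  calc _ ≤ ∑' n : ℕ, ENNReal.ofReal (((n + N + 1 : ℕ) : ℝ) ^ (-(α * q))) :=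
        ENNReal.tsum_le_tsum fun n => ENNReal.ofReal_le_ofReal (hterm _ (by positivity))
    _ ≤ ENNReal.ofReal ((N : ℝ) ^ (1 - α * q) / (α * q - 1)) :=
        tsum_nat_add_rpow_neg_le hq (by exact_mod_cast hx0.trans_le hN)
    _ ≤ ENNReal.ofReal ((τ ^ (-α⁻¹)) ^ (1 - α * q) / (α * q - 1)) := by
        refine ENNReal.ofReal_le_ofReal (div_le_div_of_nonneg_right ?_ (by linarith))
        exact rpow_le_rpow_of_nonpos hx0 hN (by linarith)
    _ = _ := by
        rw [← rpow_mul hτ.le, div_eq_inv_mul]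
        congr 2
        field_simp
        ring_nf

lemma tsum_min_inv_rpow_le {α q τ T : ℝ} (hα : 0 < α) (hq : 1 < α * q) (hτ : 0 < τ)
    (hτT : τ ≤ T) :
    ∑' n : ℕ, ENNReal.ofReal (min τ ((n : ℝ) ^ α + 1)⁻¹ ^ q)
      ≤ ENNReal.ofReal ((1 + 2 * T ^ α⁻¹ + (α * q - 1)⁻¹) * τ ^ (q - α⁻¹)) := by
  have hq0 : 0 < q := pos_of_mul_pos_right (one_pos.trans hq) hα.le
  have hT : 0 < T := hτ.trans_le hτT
  set N := ⌈τ ^ (-α⁻¹)⌉₊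
  have head : ∑ n ∈ Finset.range (N + 1), ENNReal.ofReal (min τ ((n : ℝ) ^ α + 1)⁻¹ ^ q)
      ≤ ENNReal.ofReal ((1 + 2 * T ^ α⁻¹) * τ ^ (q - α⁻¹)) := by
    have hN : (N : ℝ) < τ ^ (-α⁻¹) + 1 := Nat.ceil_lt_add_one (rpow_pos_of_pos hτ _).le
    have hxτ : τ ^ (-α⁻¹) * τ ^ q = τ ^ (q - α⁻¹) := by rw [← rpow_add hτ]; ring_nf
    have hτq : τ ^ q ≤ T ^ α⁻¹ * τ ^ (q - α⁻¹) := by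
      calc τ ^ q = τ ^ α⁻¹ * τ ^ (q - α⁻¹) := by rw [← rpow_add hτ]; ring_nf
        _ ≤ T ^ α⁻¹ * τ ^ (q - α⁻¹) := by gcongr
    calc _ ≤ ∑ _n ∈ Finset.range (N + 1), ENNReal.ofReal (τ ^ q) :=
          Finset.sum_le_sum fun n _ => ENNReal.ofReal_le_ofReal
            (rpow_le_rpow (le_min hτ.le (by positivity)) (min_le_left _ _) hq0.le)
      _ = ENNReal.ofReal ((N + 1) * τ ^ q) := by
          rw [Finset.sum_const, Finset.card_range, nsmul_eq_mul, ENNReal.ofReal_mul (by positivity)]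
          norm_cast
      _ ≤ _ := ENNReal.ofReal_le_ofReal (by nlinarith [rpow_pos_of_pos hτ q])
  rw [← ENNReal.summable.sum_add_tsum_nat_add' (k := N + 1)]
  refine (add_le_add head (tsum_min_inv_rpow_nat_add_le hα hq hτ (Nat.le_ceil _))).trans_eq ?_
  rw [← ENNReal.ofReal_add (by positivity)
    (mul_nonneg (inv_nonneg.mpr (by linarith)) (by positivity))]
  ring_nf

lemma tsum_int_natAbs_le (H : ℕ → ℝ≥0∞) : ∑' k : ℤ, H k.natAbs ≤ 2 * ∑' n, H n := by
  rw [tsum_of_nat_of_neg_add_one ENNReal.summable ENNReal.summable, two_mul]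
  refine add_le_add (by simp) ?_
  calc ∑' n : ℕ, H (-((n : ℤ) + 1)).natAbs = ∑' n : ℕ, H (n + 1) := rfl
    _ ≤ ∑' n, H n := ENNReal.tsum_comp_le_tsum_of_injective (add_left_injective 1) H

lemma min_inv_le_inv_mul_min_inv {c x y τ : ℝ} (hc : 0 < c) (hc1 : c ≤ 1) (hx : 0 < x)
    (hτ : 0 ≤ τ) (h : c * x ≤ y) : min τ y⁻¹ ≤ c⁻¹ * min τ x⁻¹ := by
  rw [mul_min_of_nonneg _ _ (inv_nonneg.mpr hc.le), ← mul_inv]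
  exact min_le_min (le_mul_of_one_le_left hτ ((one_le_inv₀ hc).mpr hc1))
    (inv_anti₀ (by positivity) h)

lemma tsum_int_min_inv_rpow_le {d : ℕ} (hd : Even d) {c q τ T : ℝ} {g : ℤ → ℝ}
    (hc : 0 < c) (hc1 : c ≤ 1) (hg : ∀ k : ℤ, c * ((k : ℝ) ^ d + 1) ≤ g k) (hq : 1 < d * q)
    (hτ : 0 < τ) (hτT : τ ≤ T) :
    ∑' k : ℤ, ENNReal.ofReal (min τ (g k)⁻¹ ^ q)
      ≤ ENNReal.ofReal (2 * c ^ (-q) * (1 + 2 * T ^ (d : ℝ)⁻¹ + (d * q - 1)⁻¹)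
          * τ ^ (q - (d : ℝ)⁻¹)) := by
  have hd0 : (0 : ℝ) < d := pos_of_mul_pos_left (one_pos.trans hq) <|
    (pos_of_mul_pos_right (one_pos.trans hq) (Nat.cast_nonneg d)).le
  have hq0 : 0 < q := pos_of_mul_pos_right (one_pos.trans hq) hd0.le
  have hT : 0 < T := hτ.trans_le hτT
  set f : ℕ → ℝ≥0∞ := fun n => ENNReal.ofReal (min τ ((n : ℝ) ^ (d : ℝ) + 1)⁻¹ ^ q)
  have hterm : ∀ k : ℤ, ENNReal.ofReal (min τ (g k)⁻¹ ^ q)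
      ≤ ENNReal.ofReal (c ^ (-q)) * f k.natAbs := by
    intro k
    have hk : ((k.natAbs : ℕ) : ℝ) ^ (d : ℝ) = (k : ℝ) ^ d := by
      rw [rpow_natCast, Nat.cast_natAbs, Int.cast_abs, hd.pow_abs]
    have hkd : 0 < (k : ℝ) ^ d + 1 := by linarith [hd.pow_nonneg (k : ℝ)]
    have hmin : 0 ≤ min τ ((k : ℝ) ^ d + 1)⁻¹ := le_min hτ.le (inv_nonneg.mpr hkd.le)
    rw [← ENNReal.ofReal_mul (rpow_pos_of_pos hc _).le, hk, rpow_neg hc.le, ← inv_rpow hc.le,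
      ← mul_rpow (by positivity) hmin]
    refine ENNReal.ofReal_le_ofReal (rpow_le_rpow (le_min hτ.le ?_) ?_ hq0.le)
    · exact inv_nonneg.mpr ((mul_pos hc hkd).le.trans (hg k))
    · exact min_inv_le_inv_mul_min_inv hc hc1 hkd hτ.le (hg k)
  calc ∑' k : ℤ, ENNReal.ofReal (min τ (g k)⁻¹ ^ q)
      ≤ ENNReal.ofReal (c ^ (-q)) * ∑' k : ℤ, f k.natAbs := by
        rw [← ENNReal.tsum_mul_left]; exact ENNReal.tsum_le_tsum hterm
    _ ≤ ENNReal.ofReal (c ^ (-q)) * (2 * ∑' n, f n) := by gcongr; exact tsum_int_natAbs_le f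
    _ ≤ ENNReal.ofReal (c ^ (-q)) * (2 * ENNReal.ofReal
          ((1 + 2 * T ^ (d : ℝ)⁻¹ + (d * q - 1)⁻¹) * τ ^ (q - (d : ℝ)⁻¹))) := by
        gcongr; exact tsum_min_inv_rpow_le hd0 hq hτ hτT
    _ = _ := by
        have : (0 : ℝ) ≤ (d * q - 1)⁻¹ := inv_nonneg.mpr (by linarith)
        rw [← ENNReal.ofReal_ofNat 2, ← ENNReal.ofReal_mul (by norm_num),
          ← ENNReal.ofReal_mul (by positivity)]
        ring_nf

lemma tsum_prod_ofReal_mul {α β : Type*} {f : α → ℝ} {g : β → ℝ} (hf : ∀ a, 0 ≤ f a) :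
    ∑' p : α × β, ENNReal.ofReal (f p.1 * g p.2)
      = (∑' a, ENNReal.ofReal (f a)) * ∑' b, ENNReal.ofReal (g b) := by
  simp_rw [ENNReal.ofReal_mul (hf _)]
  rw [ENNReal.tsum_prod (f := fun a b => ENNReal.ofReal (f a) * ENNReal.ofReal (g b)),
    ← ENNReal.tsum_mul_right]
  simp_rw [ENNReal.tsum_mul_left]

lemma min_pow_four_div_three_mul_le (a x : ℝ) :
    min (a ^ 4) 1 / 3 * (x ^ 4 + 1) ≤ (1 - (a * x) ^ 2) ^ 2 + 1 := by
  have h : min (a ^ 4) 1 * (x ^ 4 + 1) ≤ ((a * x) ^ 2) ^ 2 + 1 := by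
    have := mul_le_mul_of_nonneg_right (min_le_left (a ^ 4) 1) (by positivity : 0 ≤ x ^ 4)
    nlinarith [min_le_right (a ^ 4) 1]
  nlinarith [sq_nonneg ((a * x) ^ 2 - 3 / 2)]

lemma min_sq_mul_le (a x : ℝ) : min (a ^ 2) 1 * (x ^ 2 + 1) ≤ (a * x) ^ 2 + 1 := by
  have := mul_le_mul_of_nonneg_right (min_le_left (a ^ 2) 1) (sq_nonneg x)
  nlinarith [min_le_right (a ^ 2) 1]

lemma lintegral_shWeight_le {L θ q₁ q₂ s t : ℝ} (hθ : 0 ≤ θ) (hq₁ : 0 ≤ q₁) (hq₂ : 0 ≤ q₂)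
    (hq : q₁ + q₂ = 1 - 2 * θ) (hst : s < t) (k l : ℤ) :
    ∫⁻ u in Ioc s t, ENNReal.ofReal (shWeight L (k, l) ^ (2 * θ)
        * exp (-(2 * (t - u) * (shWeight L (k, l) - 2))))
      ≤ ENNReal.ofReal (exp (4 * (t - s))) *
        ENNReal.ofReal (min (t - s) ((1 - (π / L * k) ^ 2) ^ 2 + 1)⁻¹ ^ q₁
          * min (t - s) ((π / L * l) ^ 2 + 1)⁻¹ ^ q₂) := by
  have hw : shWeight L (k, l) = (1 - (π / L * k) ^ 2) ^ 2 + (π / L * l) ^ 2 + 1 := by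
    simp only [shWeight, div_mul_eq_mul_div]
  refine (lintegral_rpow_mul_exp_le (by rw [hw]; positivity) (by positivity) hst).trans ?_
  rw [← ENNReal.ofReal_mul (exp_pos _).le, ← hq, hw]
  exact ENNReal.ofReal_le_ofReal (mul_le_mul_of_nonneg_left
    (min_inv_rpow_add_le (sub_pos.mpr hst) (sq_nonneg _) (sq_nonneg _) hq₁ hq₂) (exp_pos _).le)

lemma exists_tsum_min_inv_rpow_mul_le {L T θ : ℝ} (hL : 0 < L) (hT : 0 < T) (hθ : θ < 1 / 8) :
    ∃ K > 0, ∀ τ, 0 < τ → τ ≤ T →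
      ∑' kl : ℤ × ℤ, ENNReal.ofReal (min τ ((1 - (π / L * kl.1) ^ 2) ^ 2 + 1)⁻¹ ^ (3 / 8 - θ)
          * min τ ((π / L * kl.2) ^ 2 + 1)⁻¹ ^ (5 / 8 - θ))
        ≤ ENNReal.ofReal (K * τ ^ (1 / 4 - 2 * θ)) := by
  have hc₁ : 0 < min ((π / L) ^ 4) 1 / 3 := by positivity
  have hc₂ : 0 < min ((π / L) ^ 2) 1 := by positivity
  have hq₁ : 1 < ((4 : ℕ) : ℝ) * (3 / 8 - θ) := by push_cast; linarith
  have hq₂ : 1 < ((2 : ℕ) : ℝ) * (5 / 8 - θ) := by push_cast; linarith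
  set K₁ := 2 * (min ((π / L) ^ 4) 1 / 3) ^ (-(3 / 8 - θ)) *
    (1 + 2 * T ^ ((4 : ℕ) : ℝ)⁻¹ + ((4 : ℕ) * (3 / 8 - θ) - 1)⁻¹)
  set K₂ := 2 * (min ((π / L) ^ 2) 1) ^ (-(5 / 8 - θ)) *
    (1 + 2 * T ^ ((2 : ℕ) : ℝ)⁻¹ + ((2 : ℕ) * (5 / 8 - θ) - 1)⁻¹)
  have hK₁ : 0 < K₁ := by have := inv_pos.mpr (sub_pos.mpr hq₁); positivity
  have hK₂ : 0 < K₂ := by have := inv_pos.mpr (sub_pos.mpr hq₂); positivity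
  refine ⟨K₁ * K₂, by positivity, fun τ hτ hτT => ?_⟩
  rw [tsum_prod_ofReal_mul (f := fun k : ℤ => min τ ((1 - (π / L * k) ^ 2) ^ 2 + 1)⁻¹ ^ (3 / 8 - θ))
    (g := fun l : ℤ => min τ ((π / L * l) ^ 2 + 1)⁻¹ ^ (5 / 8 - θ))
    fun k => rpow_nonneg (le_min hτ.le (by positivity)) _]
  calc _ ≤ ENNReal.ofReal (K₁ * τ ^ ((3 / 8 - θ) - ((4 : ℕ) : ℝ)⁻¹))
        * ENNReal.ofReal (K₂ * τ ^ ((5 / 8 - θ) - ((2 : ℕ) : ℝ)⁻¹)) := by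
        gcongr
        · exact tsum_int_min_inv_rpow_le (by decide) hc₁
            (by linarith [min_le_right ((π / L) ^ 4) 1])
            (fun k => min_pow_four_div_three_mul_le _ _) hq₁ hτ hτT
        · exact tsum_int_min_inv_rpow_le (by decide) hc₂ (min_le_right _ _)
            (fun l => min_sq_mul_le _ _) hq₂ hτ hτT
    _ = ENNReal.ofReal (K₁ * K₂ * τ ^ (1 / 4 - 2 * θ)) := by
        rw [← ENNReal.ofReal_mul (by positivity), mul_mul_mul_comm, ← rpow_add hτ]
        congr 3
        push_cast
        ring

/-- Bound on the quantity `I₂` from the Itô isometry: for `0 ≤ θ < 1/8` there is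
`C = C(θ,T,L) > 0` with
`∑_{(k,l)∈ℤ²} ∫_s^t w_{k,l}^{2θ} e^{-2(t-u)(w_{k,l}-2)} du ≤ C (t-s)^{1/4-2θ}`
for all `0 ≤ s < t ≤ T`. -/
theorem stmt_6 (L T θ : ℝ) (hL : 0 < L) (hT : 0 < T) (hθ0 : 0 ≤ θ) (hθ : θ < 1 / 8) :
    ∃ C > (0:ℝ), ∀ s t : ℝ, 0 ≤ s → s < t → t ≤ T →
      (∑' kl : ℤ × ℤ, ∫⁻ u in Set.Ioc s t,
          ENNReal.ofReal ((shWeight L kl) ^ (2 * θ)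
            * Real.exp (-(2 * (t - u) * (shWeight L kl - 2)))))
        ≤ ENNReal.ofReal (C * (t - s) ^ ((1:ℝ)/4 - 2 * θ)) := by
  obtain ⟨K, hK, hsum⟩ := exists_tsum_min_inv_rpow_mul_le hL hT hθ
  refine ⟨exp (4 * T) * K, by positivity, fun s t hs hst htT => ?_⟩
  calc _ ≤ ∑' kl : ℤ × ℤ, ENNReal.ofReal (exp (4 * T)) *
        ENNReal.ofReal (min (t - s) ((1 - (π / L * kl.1) ^ 2) ^ 2 + 1)⁻¹ ^ (3 / 8 - θ)
          * min (t - s) ((π / L * kl.2) ^ 2 + 1)⁻¹ ^ (5 / 8 - θ)) := by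
        refine ENNReal.tsum_le_tsum fun kl => (lintegral_shWeight_le (q₁ := 3 / 8 - θ)
          (q₂ := 5 / 8 - θ) hθ0 (by linarith) (by linarith) (by ring) hst kl.1 kl.2).trans ?_
        exact mul_le_mul_left (ENNReal.ofReal_le_ofReal (exp_le_exp.mpr (by linarith))) _
    _ ≤ ENNReal.ofReal (exp (4 * T)) * ENNReal.ofReal (K * (t - s) ^ (1 / 4 - 2 * θ)) := by
        rw [ENNReal.tsum_mul_left]
        gcongr
        exact hsum _ (sub_pos.mpr hst) (by linarith)
    _ = ENNReal.ofReal (exp (4 * T) * K * (t - s) ^ ((1:ℝ)/4 - 2 * θ)) := by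
        rw [← ENNReal.ofReal_mul (exp_pos _).le, mul_assoc]
end

section
/- Let $L > 0$, $T > 0$ and $\theta, \gamma \ge 0$ with $\theta + \gamma < 1/8$, and for $(k,l) \in \mathbb{Z}^2$ set $w_{k,l} = (1-(\pi k/L)^2)^2 + (\pi l/L)^2 + 1$. Then there exists a constant $C = C(\gamma, \theta, T, L) > 0$ such that for all $0 \le s \le t \le T$, $\sum_{(k,l)\in\mathbb{Z}^2} \int_0^s w_{k,l}^{2\theta}\, \big(e^{-(t-u)(w_{k,l}-2)} - e^{-(s-u)(w_{k,l}-2)}\big)^2\,du \;\le\; C\,(t-s)^{2\gamma}$. -/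
/-! Write `a = w - 2` and `h = t - s`. The integrand of the mode `w` factors as
`w^{2θ} (1 - e^{-ha})² e^{-2(s-u)a}`. For `w ≥ 3` the time integral is at most `1/(2a)` and
`(1 - e^{-ha})² ≤ (ha)^{2γ}`; for the unstable or weakly damped modes `w < 3`,
`(1 - e^{-ha})²` is Lipschitz-bounded by `e^{2T} h²`. Either way the mode contributes at most
`M w^{2θ+2γ-1} h^{2γ}`. As `w_{k,l}` grows like `k⁴ + l²`, the sum of `w^{-α}` over `ℤ²`
converges for `α > 1/4 + 1/2`, and `α = 1 - 2θ - 2γ > 3/4` is exactly `θ + γ < 1/8`. -/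

open scoped ENNReal

open Real MeasureTheory Set

lemma summable_int_rpow_neg_of_mul_abs_pow_le {f : ℤ → ℝ} {c p : ℝ} {n : ℕ} (hc : 0 < c)
    (hnp : 1 < n * p) (hf : ∀ k : ℤ, c * |(k : ℝ)| ^ n ≤ f k) :
    Summable fun k => f k ^ (-p) := by
  have hp : 0 ≤ p := by
    by_contra! hp
    nlinarith [(Nat.cast_nonneg n : (0 : ℝ) ≤ n)]
  refine Summable.of_norm_bounded_eventually
    ((summable_abs_int_rpow hnp).mul_left (c ^ (-p))) ?_
  filter_upwards [(Set.finite_singleton (0 : ℤ)).compl_mem_cofinite] with k hk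
  have hk : 0 < c * |(k : ℝ)| ^ n := by
    have : (k : ℝ) ≠ 0 := by exact_mod_cast hk
    positivity
  rw [norm_of_nonneg (rpow_nonneg (hk.le.trans (hf k)) _)]
  calc f k ^ (-p) ≤ (c * |(k : ℝ)| ^ n) ^ (-p) := rpow_le_rpow_of_nonpos hk (hf k) (by linarith)
    _ = c ^ (-p) * |(k : ℝ)| ^ (-(n * p)) := by
      rw [mul_rpow hc.le (by positivity), ← rpow_natCast, ← rpow_mul (abs_nonneg _), mul_neg]

lemma summable_one_add_sq_one_sub_sq_rpow_neg {L p : ℝ} (hL : 0 < L) (hp : 1 / 4 < p) :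
    Summable fun k : ℤ => (1 + (1 - (π * k / L) ^ 2) ^ 2) ^ (-p) := by
  refine summable_int_rpow_neg_of_mul_abs_pow_le (c := (π / L) ^ 4 / 2) (n := 4)
    (by positivity) (by push_cast; linarith) fun k => ?_
  have hk : (π / L) ^ 4 / 2 * |(k : ℝ)| ^ 4 = ((π * k / L) ^ 2) ^ 2 / 2 := by
    rw [Even.pow_abs (by decide)]; ring
  rw [hk]
  nlinarith [sq_nonneg ((π * k / L) ^ 2 - 2)]

lemma summable_one_add_sq_rpow_neg {L q : ℝ} (hL : 0 < L) (hq : 1 / 2 < q) :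
    Summable fun l : ℤ => (1 + (π * l / L) ^ 2) ^ (-q) := by
  refine summable_int_rpow_neg_of_mul_abs_pow_le (c := (π / L) ^ 2) (n := 2)
    (by positivity) (by push_cast; linarith) fun l => ?_
  have hl : (π / L) ^ 2 * |(l : ℝ)| ^ 2 = (π * l / L) ^ 2 := by
    rw [sq_abs]; ring
  linarith

lemma one_le_shWeight (L : ℝ) (kl : ℤ × ℤ) : 1 ≤ shWeight L kl := by
  unfold shWeight
  linarith [sq_nonneg (1 - (π * (kl.1 : ℝ) / L) ^ 2), sq_nonneg (π * (kl.2 : ℝ) / L)]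

/-- As `w ≥ 1 + (1 - (πk/L)²)²` and `w ≥ 1 + (πl/L)²`, splitting `-β = p + q` with `p > 1/4`,
`q > 1/2` reduces the claim to two one-dimensional sums. -/
lemma summable_shWeight_rpow {L β : ℝ} (hL : 0 < L) (hβ : β < -3 / 4) :
    Summable fun kl => shWeight L kl ^ β := by
  have hsum := (summable_one_add_sq_one_sub_sq_rpow_neg hL (p := -β / 2 - 1 / 8)
    (by linarith)).mul_of_nonneg (summable_one_add_sq_rpow_neg hL (q := -β / 2 + 1 / 8)
      (by linarith)) (fun _ => rpow_nonneg (by positivity) _)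
      (fun _ => rpow_nonneg (by positivity) _)
  refine hsum.of_nonneg_of_le (fun kl => rpow_nonneg (by linarith [one_le_shWeight L kl]) _)
    fun kl => ?_
  have hB := sq_nonneg (1 - (π * (kl.1 : ℝ) / L) ^ 2)
  have hC := sq_nonneg (π * (kl.2 : ℝ) / L)
  calc shWeight L kl ^ β
      = shWeight L kl ^ (-(-β / 2 - 1 / 8)) * shWeight L kl ^ (-(-β / 2 + 1 / 8)) := by
        rw [← rpow_add (by linarith [one_le_shWeight L kl])]; ring_nf
    _ ≤ _ := by
      unfold shWeight
      gcongr ?_ * ?_ <;> refine rpow_le_rpow_of_nonpos (by positivity) ?_ (by linarith) <;>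
        linarith

lemma abs_one_sub_exp_neg_le (x : ℝ) : |1 - exp (-x)| ≤ |x| * exp |x| := by
  have hx : 1 ≤ exp |x| := one_le_exp (abs_nonneg x)
  have hexp : exp (-x) ≤ exp |x| := exp_le_exp.mpr (neg_le_abs x)
  have hlow : exp (-x) * (1 + x) ≤ 1 := by
    calc exp (-x) * (1 + x) ≤ exp (-x) * exp x := by gcongr; linarith [add_one_le_exp x]
      _ = 1 := by rw [← exp_add, neg_add_cancel, exp_zero]
  rw [abs_le]
  constructor
  · calc -(|x| * exp |x|) ≤ -(|x| * exp (-x)) := by gcongr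
      _ ≤ -(-x * exp (-x)) := by gcongr; exact neg_le_abs x
      _ ≤ 1 - exp (-x) := by linarith
  · calc 1 - exp (-x) ≤ |x| * 1 := by linarith [add_one_le_exp (-x), le_abs_self x]
      _ ≤ |x| * exp |x| := by gcongr

lemma one_sub_exp_neg_sq_le_rpow {x p : ℝ} (hx : 0 ≤ x) (hp0 : 0 ≤ p) (hp2 : p ≤ 2) :
    (1 - exp (-x)) ^ 2 ≤ x ^ p := by
  have h0 : 0 ≤ 1 - exp (-x) := by linarith [exp_le_one_iff.mpr (neg_nonpos.mpr hx)]
  rcases le_or_gt x 1 with hx1 | hx1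
  · calc (1 - exp (-x)) ^ 2 ≤ x ^ (2 : ℝ) := by
          rw [rpow_two]; gcongr; linarith [add_one_le_exp (-x)]
      _ ≤ x ^ p := rpow_le_rpow_of_exponent_ge' hx hx1 hp0 hp2
  · calc (1 - exp (-x)) ^ 2 ≤ 1 := pow_le_one₀ h0 (by linarith [exp_pos (-x)])
      _ ≤ x ^ p := one_le_rpow hx1.le hp0

lemma lintegral_Ioc_exp_le_inv {s b : ℝ} (hb : 0 < b) :
    ∫⁻ u in Ioc 0 s, ENNReal.ofReal (exp (-((s - u) * b))) ≤ ENNReal.ofReal (1 / b) := by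
  have hexp : ∀ u, exp (-((s - u) * b)) = exp (-(b * s)) * exp (b * u) := by
    intro u; rw [← exp_add]; ring_nf
  calc ∫⁻ u in Ioc 0 s, ENNReal.ofReal (exp (-((s - u) * b)))
      ≤ ∫⁻ u in Iic s, ENNReal.ofReal (exp (-(b * s)) * exp (b * u)) := by
        simp_rw [hexp]; exact lintegral_mono_set Ioc_subset_Iic_self
    _ = ENNReal.ofReal (∫ u in Iic s, exp (-(b * s)) * exp (b * u)) :=
        (ofReal_integral_eq_lintegral_ofReal ((integrableOn_exp_mul_Iic hb s).const_mul _)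
          (Filter.Eventually.of_forall fun _ => by positivity)).symm
    _ = ENNReal.ofReal (1 / b) := by
        rw [integral_const_mul, integral_exp_mul_Iic hb, mul_div_assoc', ← exp_add,
          neg_add_cancel, exp_zero]

lemma lintegral_Ioc_exp_le_mul_exp {s a : ℝ} (hs : 0 ≤ s) (ha : -1 ≤ a) :
    ∫⁻ u in Ioc 0 s, ENNReal.ofReal (exp (-((s - u) * (2 * a))))
      ≤ ENNReal.ofReal (s * exp (2 * s)) := by
  calc ∫⁻ u in Ioc 0 s, ENNReal.ofReal (exp (-((s - u) * (2 * a))))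
      ≤ ∫⁻ _ in Ioc 0 s, ENNReal.ofReal (exp (2 * s)) := by
        refine setLIntegral_mono measurable_const fun u hu => ENNReal.ofReal_le_ofReal ?_
        exact exp_le_exp.mpr (by nlinarith [hu.1, hu.2])
    _ = ENNReal.ofReal (s * exp (2 * s)) := by
        rw [setLIntegral_const, volume_Ioc, sub_zero, mul_comm, ENNReal.ofReal_mul hs]

lemma lintegral_const_mul_sq_exp_sub_exp (μ : Measure ℝ) {K : ℝ} (hK : 0 ≤ K) (s t a : ℝ) :
    ∫⁻ u, ENNReal.ofReal (K * (exp (-((t - u) * a)) - exp (-((s - u) * a))) ^ 2) ∂μ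
      = ENNReal.ofReal (K * (1 - exp (-((t - s) * a))) ^ 2)
        * ∫⁻ u, ENNReal.ofReal (exp (-((s - u) * (2 * a)))) ∂μ := by
  rw [← lintegral_const_mul' _ _ ENNReal.ofReal_ne_top]
  refine lintegral_congr fun u => ?_
  rw [← ENNReal.ofReal_mul (by positivity)]
  congr 1
  have ht : exp (-((t - u) * a)) = exp (-((t - s) * a)) * exp (-((s - u) * a)) := by
    rw [← exp_add]; ring_nf
  have hs : exp (-((s - u) * (2 * a))) = exp (-((s - u) * a)) ^ 2 := by
    rw [← exp_nat_mul]; ring_nf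
  rw [ht, hs]; ring

section Mode

variable {w θ γ s t T : ℝ}

lemma lintegral_mode_le_of_three_le (hw : 3 ≤ w) (hγ0 : 0 ≤ γ) (hγ1 : γ ≤ 1) (hst : s ≤ t) :
    ∫⁻ u in Ioc 0 s, ENNReal.ofReal (w ^ (2 * θ)
        * (exp (-((t - u) * (w - 2))) - exp (-((s - u) * (w - 2)))) ^ 2)
      ≤ ENNReal.ofReal (3 / 2 * w ^ (2 * θ + 2 * γ - 1) * (t - s) ^ (2 * γ)) := by
  have hw0 : 0 < w := by linarith
  rw [lintegral_const_mul_sq_exp_sub_exp _ (by positivity)]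
  grw [lintegral_Ioc_exp_le_inv (by linarith), ← ENNReal.ofReal_mul (by positivity)]
  refine ENNReal.ofReal_le_ofReal ?_
  have hts : 0 ≤ t - s := sub_nonneg.mpr hst
  have hdecay : (1 - exp (-((t - s) * (w - 2)))) ^ 2 ≤ (t - s) ^ (2 * γ) * w ^ (2 * γ) :=
    calc (1 - exp (-((t - s) * (w - 2)))) ^ 2 ≤ ((t - s) * (w - 2)) ^ (2 * γ) :=
          one_sub_exp_neg_sq_le_rpow (by nlinarith) (by linarith) (by linarith)
      _ = (t - s) ^ (2 * γ) * (w - 2) ^ (2 * γ) := mul_rpow hts (by linarith)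
      _ ≤ (t - s) ^ (2 * γ) * w ^ (2 * γ) := by gcongr <;> linarith
  have hinv : 1 / (2 * (w - 2)) ≤ 3 / (2 * w) := by
    rw [div_le_div_iff₀ (by linarith) (by linarith)]; linarith
  calc w ^ (2 * θ) * (1 - exp (-((t - s) * (w - 2)))) ^ 2 * (1 / (2 * (w - 2)))
      ≤ w ^ (2 * θ) * ((t - s) ^ (2 * γ) * w ^ (2 * γ)) * (3 / (2 * w)) := by
        gcongr
        exact (one_div_pos.mpr (by linarith)).le
    _ = 3 / 2 * w ^ (2 * θ + 2 * γ - 1) * (t - s) ^ (2 * γ) := by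
      rw [rpow_sub hw0, rpow_add hw0, rpow_one]; field_simp

lemma lintegral_mode_le_of_lt_three (hw1 : 1 ≤ w) (hw3 : w < 3) (hγ0 : 0 ≤ γ) (hγ1 : γ ≤ 1)
    (hs : 0 ≤ s) (hst : s ≤ t) (htT : t ≤ T) :
    ∫⁻ u in Ioc 0 s, ENNReal.ofReal (w ^ (2 * θ)
        * (exp (-((t - u) * (w - 2))) - exp (-((s - u) * (w - 2)))) ^ 2)
      ≤ ENNReal.ofReal (3 * T * exp (4 * T) * T ^ (2 - 2 * γ)
          * w ^ (2 * θ + 2 * γ - 1) * (t - s) ^ (2 * γ)) := by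
  have hw0 : 0 < w := by linarith
  rw [lintegral_const_mul_sq_exp_sub_exp _ (by positivity)]
  grw [lintegral_Ioc_exp_le_mul_exp hs (by linarith), ← ENNReal.ofReal_mul (by positivity)]
  refine ENNReal.ofReal_le_ofReal ?_
  have hts : 0 ≤ t - s := sub_nonneg.mpr hst
  have hx : |(t - s) * (w - 2)| ≤ t - s := by
    rw [abs_mul, abs_of_nonneg hts]
    exact mul_le_of_le_one_right hts (abs_le.mpr ⟨by linarith, by linarith⟩)
  have hlip : (1 - exp (-((t - s) * (w - 2)))) ^ 2 ≤ exp (2 * T) * (t - s) ^ 2 :=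
    calc (1 - exp (-((t - s) * (w - 2)))) ^ 2
        ≤ (|(t - s) * (w - 2)| * exp |(t - s) * (w - 2)|) ^ 2 := by
          rw [← sq_abs]; gcongr; exact abs_one_sub_exp_neg_le _
      _ ≤ ((t - s) * exp T) ^ 2 := by gcongr; linarith
      _ = exp (2 * T) * (t - s) ^ 2 := by rw [mul_pow, ← exp_nat_mul]; ring_nf
  have hsq : (t - s) ^ 2 ≤ T ^ (2 - 2 * γ) * (t - s) ^ (2 * γ) := by
    have hsplit : (t - s) ^ (2 : ℝ) = (t - s) ^ (2 - 2 * γ) * (t - s) ^ (2 * γ) := by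
      rw [← rpow_add' hts (by ring_nf; norm_num)]; ring_nf
    rw [← rpow_two, hsplit]
    gcongr <;> linarith
  have hdecay := hlip.trans (mul_le_mul_of_nonneg_left hsq (exp_pos _).le)
  have hweight : w ^ (2 * θ) ≤ 3 * w ^ (2 * θ + 2 * γ - 1) := by
    have : 1 ≤ w ^ (2 * γ) := one_le_rpow hw1 (by linarith)
    rw [rpow_sub hw0, rpow_add hw0, rpow_one, mul_div_assoc', le_div_iff₀ hw0]
    nlinarith [rpow_pos_of_pos hw0 (2 * θ)]
  have htime : s * exp (2 * s) ≤ T * exp (2 * T) := by gcongr <;> linarith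
  calc w ^ (2 * θ) * (1 - exp (-((t - s) * (w - 2)))) ^ 2 * (s * exp (2 * s))
      ≤ (3 * w ^ (2 * θ + 2 * γ - 1)) * (exp (2 * T) * (T ^ (2 - 2 * γ) * (t - s) ^ (2 * γ)))
          * (T * exp (2 * T)) := by
        gcongr
        exact mul_nonneg (by positivity) ((sq_nonneg _).trans hdecay)
    _ = 3 * T * exp (4 * T) * T ^ (2 - 2 * γ) * w ^ (2 * θ + 2 * γ - 1)
          * (t - s) ^ (2 * γ) := by
      rw [show 4 * T = 2 * T + 2 * T by ring, exp_add]; ring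

lemma lintegral_mode_le (hw : 1 ≤ w) (hγ0 : 0 ≤ γ) (hγ1 : γ ≤ 1) (hs : 0 ≤ s) (hst : s ≤ t)
    (htT : t ≤ T) :
    ∫⁻ u in Ioc 0 s, ENNReal.ofReal (w ^ (2 * θ)
        * (exp (-((t - u) * (w - 2))) - exp (-((s - u) * (w - 2)))) ^ 2)
      ≤ ENNReal.ofReal (max (3 / 2) (3 * T * exp (4 * T) * T ^ (2 - 2 * γ))
          * w ^ (2 * θ + 2 * γ - 1) * (t - s) ^ (2 * γ)) := by
  have hts : 0 ≤ (t - s) ^ (2 * γ) := rpow_nonneg (sub_nonneg.mpr hst) _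
  rcases lt_or_ge w 3 with hw3 | hw3
  · grw [lintegral_mode_le_of_lt_three hw hw3 hγ0 hγ1 hs hst htT, ← le_max_right]
  · grw [lintegral_mode_le_of_three_le hw3 hγ0 hγ1 hst, ← le_max_left]

end Mode

theorem stmt_7_general (L T θ γ : ℝ) (hL : 0 < L) (hθ0 : 0 ≤ θ) (hγ0 : 0 ≤ γ)
    (hθγ : θ + γ < 1 / 8) :
    ∃ C > (0:ℝ), ∀ s t : ℝ, 0 ≤ s → s ≤ t → t ≤ T →
      (∑' kl : ℤ × ℤ, ∫⁻ u in Set.Ioc 0 s,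
          ENNReal.ofReal ((shWeight L kl) ^ (2 * θ)
            * (Real.exp (-((t - u) * (shWeight L kl - 2)))
                - Real.exp (-((s - u) * (shWeight L kl - 2)))) ^ 2))
        ≤ ENNReal.ofReal (C * (t - s) ^ (2 * γ)) := by
  set M := max (3 / 2) (3 * T * exp (4 * T) * T ^ (2 - 2 * γ))
  set β := 2 * θ + 2 * γ - 1
  have hM : 0 < M := lt_max_of_lt_left (by norm_num)
  have hsum := summable_shWeight_rpow (β := β) hL (by linarith)
  have hpos : ∀ kl, 0 < shWeight L kl ^ β := fun kl =>
    rpow_pos_of_pos (by linarith [one_le_shWeight L kl]) _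
  refine ⟨M * ∑' kl, shWeight L kl ^ β,
    mul_pos hM (hsum.tsum_pos (fun kl => (hpos kl).le) 0 (hpos 0)), fun s t hs hst htT => ?_⟩
  have hts : 0 ≤ (t - s) ^ (2 * γ) := rpow_nonneg (sub_nonneg.mpr hst) _
  calc _ ≤ ∑' kl, ENNReal.ofReal (M * shWeight L kl ^ β * (t - s) ^ (2 * γ)) :=
        ENNReal.tsum_le_tsum fun kl =>
          lintegral_mode_le (one_le_shWeight L kl) hγ0 (by linarith) hs hst htT
    _ = ENNReal.ofReal (∑' kl, M * shWeight L kl ^ β * (t - s) ^ (2 * γ)) :=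
        (ENNReal.ofReal_tsum_of_nonneg (fun kl => by have := hpos kl; positivity)
          ((hsum.mul_left M).mul_right _)).symm
    _ = _ := by rw [tsum_mul_right, tsum_mul_left]

/-- Bound on the quantity `I₁` from the Itô isometry: for `θ, γ ≥ 0` with `θ + γ < 1/8`
there is `C = C(γ,θ,T,L) > 0` with
`∑_{(k,l)∈ℤ²} ∫_0^s w_{k,l}^{2θ} (e^{-(t-u)(w_{k,l}-2)} - e^{-(s-u)(w_{k,l}-2)})² du
  ≤ C (t-s)^{2γ}` for all `0 ≤ s ≤ t ≤ T`. -/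
theorem stmt_7 (L T θ γ : ℝ) (hL : 0 < L) (hT : 0 < T) (hθ0 : 0 ≤ θ) (hγ0 : 0 ≤ γ)
    (hθγ : θ + γ < 1 / 8) :
    ∃ C > (0:ℝ), ∀ s t : ℝ, 0 ≤ s → s ≤ t → t ≤ T →
      (∑' kl : ℤ × ℤ, ∫⁻ u in Set.Ioc 0 s,
          ENNReal.ofReal ((shWeight L kl) ^ (2 * θ)
            * (Real.exp (-((t - u) * (shWeight L kl - 2)))
                - Real.exp (-((s - u) * (shWeight L kl - 2)))) ^ 2))
        ≤ ENNReal.ofReal (C * (t - s) ^ (2 * γ)) :=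
  stmt_7_general L T θ γ hL hθ0 hγ0 hθγ
end

section
/- Let $L > 0$ and $T > 0$, and for $(k,l) \in \mathbb{Z}^2$ set $w_{k,l} = (1-(\pi k/L)^2)^2 + (\pi l/L)^2 + 1$. Then there exists a constant $C = C(T,L) > 0$ such that for all $0 < t \le T$, $\sum_{(k,l)\in\mathbb{Z}^2} \int_0^t e^{-2(t-u)(w_{k,l}-2)}\,du \;\le\; C\, t^{1/4} \;<\; \infty$. In particular the series converges for every $t \in (0,T]$. -/
open scoped ENNReal

/-!
Write `t = q⁴` and `b = π / L`. Since `e^{-2s(w-2)} ≤ e^{4t} e^{-2sw}` for `0 ≤ s ≤ t`, each time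
integral is at most `2 e^{4t} t / (1 + t w)`, so it suffices to bound
`∑_{k,l} q⁴ / (1 + q⁴ w_{k,l})`. For fixed `k`, `1 + q⁴ w_{k,l} ≥ r_k² + (q² b l)²` with
`r_k = (1 + (q b k)²) / 2`, because `1 + (1 - y)² ≥ y² / 2`. A sum `∑_{l ∈ ℤ} 1 / (r² + (s l)²)`
is at most `2 / r² + 4 / (r s)` by comparison with the telescoping series `∑ 1 / (r + s n)²`.
Applied in `l` this bounds the inner sum by `O(q² / (1 + (q b k)²))`, and applied once more in `k`
it bounds the double sum by `O(q)` for bounded `q`, that is by `O(t^{1/4})`.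
-/

open Real MeasureTheory

lemma tsum_inv_add_mul_succ_sq_le {r s : ℝ} (hr : 0 < r) (hs : 0 < s) :
    ∑' n : ℕ, ENNReal.ofReal (1 / (r + s * (n + 1)) ^ 2) ≤ ENNReal.ofReal (1 / (r * s)) := by
  refine ENNReal.tsum_le_of_sum_range_le fun N => ?_
  have hpos (x : ℝ) (hx : 0 ≤ x) : 0 < r + s * x := by positivity
  have htele (n : ℕ) : 1 / (r + s * (n + 1)) ^ 2
      ≤ (1 / (r + s * n) - 1 / (r + s * ((n + 1 : ℕ) : ℝ))) / s := by
    have h0 := hpos n n.cast_nonneg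
    have h1 := hpos (n + 1) (by positivity)
    push_cast
    rw [div_sub_div _ _ h0.ne' h1.ne', div_div, div_le_div_iff₀ (by positivity) (by positivity)]
    nlinarith [mul_pos (mul_pos hs h1) hs]
  rw [← ENNReal.ofReal_sum_of_nonneg fun n _ => by positivity]
  refine ENNReal.ofReal_le_ofReal ((Finset.sum_le_sum fun n _ => htele n).trans ?_)
  rw [← Finset.sum_div, Finset.sum_range_sub', Nat.cast_zero, mul_zero, add_zero, ← div_div]
  gcongr
  exact sub_le_self _ (one_div_nonneg.mpr (hpos N N.cast_nonneg).le)

lemma tsum_int_inv_add_mul_abs_sq_le {r s : ℝ} (hr : 0 < r) (hs : 0 < s) :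
    ∑' l : ℤ, ENNReal.ofReal (1 / (r + s * |(l : ℝ)|) ^ 2)
      ≤ ENNReal.ofReal (1 / r ^ 2 + 2 / (r * s)) := by
  have habs (n : ℕ) : |(n : ℝ) + 1| = n + 1 := abs_of_nonneg (by positivity)
  rw [tsum_of_nat_of_neg_add_one ENNReal.summable ENNReal.summable,
    tsum_eq_zero_add' ENNReal.summable]
  push_cast
  simp only [abs_neg, habs, abs_zero, mul_zero, add_zero, add_assoc]
  rw [show 1 / r ^ 2 + 2 / (r * s) = 1 / r ^ 2 + (1 / (r * s) + 1 / (r * s)) by ring,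
    ENNReal.ofReal_add (by positivity) (by positivity),
    ENNReal.ofReal_add (by positivity) (by positivity)]
  gcongr <;> exact tsum_inv_add_mul_succ_sq_le hr hs

lemma tsum_int_div_sq_add_mul_sq_le {c r s : ℝ} (hc : 0 ≤ c) (hr : 0 < r) (hs : 0 < s) :
    ∑' l : ℤ, ENNReal.ofReal (c / (r ^ 2 + (s * l) ^ 2))
      ≤ ENNReal.ofReal (c * (2 / r ^ 2 + 4 / (r * s))) := by
  have hpt (l : ℤ) : c / (r ^ 2 + (s * l) ^ 2) ≤ 2 * c * (1 / (r + s * |(l : ℝ)|) ^ 2) := by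
    have hsq : (s * l) ^ 2 = (s * |(l : ℝ)|) ^ 2 := by rw [mul_pow, mul_pow, sq_abs]
    rw [hsq, mul_one_div, div_le_div_iff₀ (by positivity) (by positivity)]
    nlinarith [sq_nonneg (r - s * |(l : ℝ)|), mul_nonneg hc (sq_nonneg (r - s * |(l : ℝ)|))]
  calc ∑' l : ℤ, ENNReal.ofReal (c / (r ^ 2 + (s * l) ^ 2))
      ≤ ∑' l : ℤ, ENNReal.ofReal (2 * c) * ENNReal.ofReal (1 / (r + s * |(l : ℝ)|) ^ 2) :=
        ENNReal.tsum_le_tsum fun l => by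
          rw [← ENNReal.ofReal_mul (by positivity)]; exact ENNReal.ofReal_le_ofReal (hpt l)
    _ ≤ ENNReal.ofReal (2 * c) * ENNReal.ofReal (1 / r ^ 2 + 2 / (r * s)) := by
        rw [ENNReal.tsum_mul_left]; gcongr; exact tsum_int_inv_add_mul_abs_sq_le hr hs
    _ = ENNReal.ofReal (c * (2 / r ^ 2 + 4 / (r * s))) := by
        rw [← ENNReal.ofReal_mul (by positivity)]; ring_nf

lemma one_sub_exp_neg_le {x : ℝ} (hx : 0 ≤ x) : 1 - exp (-x) ≤ 2 * x / (1 + x) := by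
  have hle_x : 1 - exp (-x) ≤ x := by linarith [add_one_le_exp (-x)]
  have hle_one : 1 - exp (-x) ≤ 1 := by linarith [exp_pos (-x)]
  rw [le_div_iff₀ (by positivity)]
  rcases le_total x 1 with h | h <;> nlinarith

lemma lintegral_exp_neg_mul_sub_le {c t : ℝ} (hc : 0 < c) (ht : 0 ≤ t) :
    ∫⁻ u in Set.Ioc 0 t, ENNReal.ofReal (exp (-(c * (t - u))))
      ≤ ENNReal.ofReal (2 * t / (1 + c * t)) := by
  have hderiv (u : ℝ) :
      HasDerivAt (fun u => exp (-(c * (t - u))) / c) (exp (-(c * (t - u)))) u := by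
    have hlin : HasDerivAt (fun u => -(c * (t - u))) c u := by
      simpa [mul_sub, neg_sub] using ((hasDerivAt_id u).const_mul c).sub_const (c * t)
    simpa only [mul_div_cancel_right₀ _ hc.ne'] using hlin.exp.div_const c
  rw [← ofReal_integral_eq_lintegral_ofReal (by fun_prop : Continuous _).integrableOn_Ioc
    (Filter.Eventually.of_forall fun u => (exp_pos _).le), ← intervalIntegral.integral_of_le ht,
    intervalIntegral.integral_eq_sub_of_hasDerivAt (fun u _ => hderiv u)
      ((by fun_prop : Continuous _).intervalIntegrable _ _)]
  refine ENNReal.ofReal_le_ofReal ?_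
  have := one_sub_exp_neg_le (mul_nonneg hc.le ht)
  simp only [sub_self, mul_zero, neg_zero, exp_zero, sub_zero]
  rw [← sub_div, div_le_div_iff₀ hc (by positivity)]
  rw [le_div_iff₀ (by positivity)] at this
  nlinarith

lemma lintegral_exp_neg_two_mul_sub_mul_sub_two_le {w t : ℝ} (hw : 0 < w) (ht : 0 ≤ t) :
    ∫⁻ u in Set.Ioc 0 t, ENNReal.ofReal (exp (-(2 * (t - u) * (w - 2))))
      ≤ ENNReal.ofReal (2 * exp (4 * t)) * ENNReal.ofReal (t / (1 + t * w)) := by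
  calc ∫⁻ u in Set.Ioc 0 t, ENNReal.ofReal (exp (-(2 * (t - u) * (w - 2))))
      ≤ ∫⁻ u in Set.Ioc 0 t,
          ENNReal.ofReal (exp (4 * t)) * ENNReal.ofReal (exp (-(2 * w * (t - u)))) := by
        refine setLIntegral_mono (by fun_prop) fun u hu => ?_
        rw [← ENNReal.ofReal_mul (exp_pos _).le, ← exp_add]
        gcongr
        nlinarith [hu.1, hu.2]
    _ = ENNReal.ofReal (exp (4 * t))
          * ∫⁻ u in Set.Ioc 0 t, ENNReal.ofReal (exp (-(2 * w * (t - u)))) :=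
        lintegral_const_mul' _ _ ENNReal.ofReal_ne_top
    _ ≤ ENNReal.ofReal (exp (4 * t)) * ENNReal.ofReal (2 * (t / (1 + t * w))) := by
        gcongr
        refine (lintegral_exp_neg_mul_sub_le (by positivity) ht).trans (ENNReal.ofReal_le_ofReal ?_)
        rw [mul_div_assoc]
        gcongr 2 * (t / ?_)
        nlinarith [mul_nonneg ht hw.le]
    _ = ENNReal.ofReal (2 * exp (4 * t)) * ENNReal.ofReal (t / (1 + t * w)) := by
        rw [ENNReal.ofReal_mul zero_le_two, ENNReal.ofReal_mul zero_le_two]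
        ring

lemma shWeight_pos (L : ℝ) (kl : ℤ × ℤ) : 0 < shWeight L kl := by
  unfold shWeight; positivity

lemma tsum_div_one_add_mul_shWeight_le {L q : ℝ} (hL : 0 < L) (hq : 0 < q) :
    ∑' kl : ℤ × ℤ, ENNReal.ofReal (q ^ 4 / (1 + q ^ 4 * shWeight L kl))
      ≤ ENNReal.ofReal (8 * q * (q ^ 2 + L / π) * (2 * q + 4 * L / π)) := by
  set b := π / L with hb_def
  have hb : 0 < b := by positivity
  set c := 8 * q ^ 2 * (q ^ 2 + 1 / b) with hc_def
  have hinner (k : ℤ) : ∑' l : ℤ, ENNReal.ofReal (q ^ 4 / (1 + q ^ 4 * shWeight L (k, l)))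
      ≤ ENNReal.ofReal (c / (1 ^ 2 + (q * b * k) ^ 2)) := by
    set X := (q * b * k) ^ 2 with hX_def
    set r := (1 + X) / 2 with hr_def
    have hr : 0 < r := by positivity
    have hsq (l : ℤ) : r ^ 2 + (q ^ 2 * b * l) ^ 2 ≤ 1 + q ^ 4 * shWeight L (k, l) := by
      have hw : shWeight L (k, l) = (1 - (b * k) ^ 2) ^ 2 + (b * l) ^ 2 + 1 := by
        simp only [shWeight, hb_def]; ring
      have hy : ((b * k) ^ 2) ^ 2 ≤ 2 * ((1 - (b * k) ^ 2) ^ 2 + 1) := by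
        nlinarith [sq_nonneg ((b * k) ^ 2 - 2)]
      rw [hw, hr_def]
      nlinarith [sq_nonneg (1 - X), mul_le_mul_of_nonneg_left hy (by positivity : (0:ℝ) ≤ q ^ 4)]
    have hreal : q ^ 4 * (2 / r ^ 2 + 4 / (r * (q ^ 2 * b))) ≤ c / (1 ^ 2 + X) := by
      have hr2 : 2 / r ^ 2 ≤ 4 / r := by
        rw [div_le_div_iff₀ (by positivity) hr]; nlinarith
      calc q ^ 4 * (2 / r ^ 2 + 4 / (r * (q ^ 2 * b)))
          ≤ q ^ 4 * (4 / r + 4 / (r * (q ^ 2 * b))) := by gcongr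
        _ = c / (1 ^ 2 + X) := by rw [hc_def, hr_def]; field_simp; ring
    calc ∑' l : ℤ, ENNReal.ofReal (q ^ 4 / (1 + q ^ 4 * shWeight L (k, l)))
        ≤ ∑' l : ℤ, ENNReal.ofReal (q ^ 4 / (r ^ 2 + (q ^ 2 * b * l) ^ 2)) :=
          ENNReal.tsum_le_tsum fun l => ENNReal.ofReal_le_ofReal
            (div_le_div_of_nonneg_left (by positivity) (by positivity) (hsq l))
      _ ≤ ENNReal.ofReal (q ^ 4 * (2 / r ^ 2 + 4 / (r * (q ^ 2 * b)))) :=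
          tsum_int_div_sq_add_mul_sq_le (by positivity) hr (by positivity)
      _ ≤ ENNReal.ofReal (c / (1 ^ 2 + X)) := ENNReal.ofReal_le_ofReal hreal
  rw [ENNReal.tsum_prod']
  calc ∑' k : ℤ, ∑' l : ℤ, ENNReal.ofReal (q ^ 4 / (1 + q ^ 4 * shWeight L (k, l)))
      ≤ ∑' k : ℤ, ENNReal.ofReal (c / (1 ^ 2 + (q * b * k) ^ 2)) := ENNReal.tsum_le_tsum hinner
    _ ≤ ENNReal.ofReal (c * (2 / 1 ^ 2 + 4 / (1 * (q * b)))) :=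
        tsum_int_div_sq_add_mul_sq_le (by positivity) one_pos (by positivity)
    _ = ENNReal.ofReal (8 * q * (q ^ 2 + L / π) * (2 * q + 4 * L / π)) := by
        rw [hc_def, hb_def]
        congr 1
        field_simp

/-- The variance of the stochastic convolution is finite: there is `C = C(T,L) > 0` with
`∑_{(k,l)∈ℤ²} ∫_0^t e^{-2(t-u)(w_{k,l}-2)} du ≤ C t^{1/4} < ∞` for all `0 < t ≤ T`. -/
theorem stmt_8 (L T : ℝ) (hL : 0 < L) (hT : 0 < T) :
    ∃ C > (0:ℝ), ∀ t : ℝ, 0 < t → t ≤ T →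
      (∑' kl : ℤ × ℤ, ∫⁻ u in Set.Ioc 0 t,
          ENNReal.ofReal (Real.exp (-(2 * (t - u) * (shWeight L kl - 2)))))
        ≤ ENNReal.ofReal (C * t ^ ((1:ℝ)/4)) ∧
      (∑' kl : ℤ × ℤ, ∫⁻ u in Set.Ioc 0 t,
          ENNReal.ofReal (Real.exp (-(2 * (t - u) * (shWeight L kl - 2))))) < ⊤ := by
  set Q := T ^ ((1:ℝ)/4)
  have hQ : 0 < Q := rpow_pos_of_pos hT _
  refine ⟨16 * exp (4 * T) * (Q ^ 2 + L / π) * (2 * Q + 4 * L / π), by positivity,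
    fun t ht htT => ?_⟩
  set q := t ^ ((1:ℝ)/4)
  have hq : 0 < q := rpow_pos_of_pos ht _
  have hqQ : q ≤ Q := rpow_le_rpow ht.le htT (by norm_num)
  have hq4 : q ^ 4 = t := by
    simpa [q, one_div] using rpow_inv_natCast_pow ht.le (n := 4) (by norm_num)
  have hbound : (∑' kl : ℤ × ℤ, ∫⁻ u in Set.Ioc 0 t,
      ENNReal.ofReal (exp (-(2 * (t - u) * (shWeight L kl - 2)))))
      ≤ ENNReal.ofReal (16 * exp (4 * T) * (Q ^ 2 + L / π) * (2 * Q + 4 * L / π) * q) :=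
    calc _ ≤ ∑' kl : ℤ × ℤ, ENNReal.ofReal (2 * exp (4 * t))
            * ENNReal.ofReal (t / (1 + t * shWeight L kl)) :=
          ENNReal.tsum_le_tsum fun kl =>
            lintegral_exp_neg_two_mul_sub_mul_sub_two_le (shWeight_pos L kl) ht.le
      _ = ENNReal.ofReal (2 * exp (4 * t))
            * ∑' kl : ℤ × ℤ, ENNReal.ofReal (q ^ 4 / (1 + q ^ 4 * shWeight L kl)) := by
          rw [hq4, ENNReal.tsum_mul_left]
      _ ≤ ENNReal.ofReal (2 * exp (4 * t))
            * ENNReal.ofReal (8 * q * (q ^ 2 + L / π) * (2 * q + 4 * L / π)) := by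
          gcongr; exact tsum_div_one_add_mul_shWeight_le hL hq
      _ ≤ _ := by
          rw [← ENNReal.ofReal_mul (by positivity)]
          refine ENNReal.ofReal_le_ofReal ?_
          calc _ = 16 * exp (4 * t) * (q ^ 2 + L / π) * (2 * q + 4 * L / π) * q := by ring
            _ ≤ _ := by gcongr
  exact ⟨hbound, hbound.trans_lt ENNReal.ofReal_lt_top⟩
end
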